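/- arXiv:1203.3162 — 3 statements merged into one kernel-verified Lean document; each statement's English description precedes it below -/
import Mathlib

section
/- Every line L in P^2 over F_{q^2} either meets the Hermitian curve X in exactly q+1 distinct F_{q^2}-rational points, or L is tangent to X at a point P with contact order q+1 and meets X in no F_{q^2}-rational point other than P. -/
/-- The homogeneous Hermitian form `y^q z + y z^q - x^(q+1)` evaluated on a vector
`v = (x, y, z)` of `F³`. -/
def hermEq (q : ℕ) {F : Type} [Field F] (v : Fin 3 → F) : F :=
  (v 1) ^ q * (v 2) + (v 1) * (v 2) ^ q - (v 0) ^ (q + 1)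

/-!
Write `⟨x, y⟩ = x₁^q y₂ + x₂^q y₁ - x₀^q y₀`, so that `hermEq q x = ⟨x, x⟩`. As `a ↦ a^q` is an
involutive automorphism of `F`, this is a nondegenerate Hermitian form: no plane `W` is totally
isotropic, and `W` has an orthogonal basis `v, u` with `⟨u, u⟩ ≠ 0`, in which
`hermEq q (s v + t u) = a s^(q+1) + b t^(q+1)` with `a^q = a`, `b^q = b`. If `a = 0`, the line
meets the curve only at `[v]`, with contact order `q + 1`. Otherwise its points on the curve are
the `[x v + u]` with `x^(q+1) = -b/a`; as `Fˣ` is cyclic of order `(q+1)(q-1)` and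
`(-b/a)^(q-1) = 1`, there are exactly `q + 1` such `x`.
-/

open Module Polynomial
open scoped LinearAlgebra.Projectivization

namespace Hermitian

section LinearAlgebra

variable {K V : Type*} [Field K] [AddCommGroup V] [Module K V]

lemma finrank_span_pair {x y : V} (h : LinearIndependent K ![x, y]) :
    finrank K (Submodule.span K {x, y}) = 2 := by
  have := finrank_span_eq_card h
  rwa [Matrix.range_cons_cons_empty, Fintype.card_fin] at this

lemma exists_linearIndependent_pair_mem {W : Submodule K V} (hW : finrank K W = 2) :
    ∃ x y : V, LinearIndependent K ![x, y] ∧ x ∈ W ∧ y ∈ W := by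
  have : Module.Finite K W := Module.finite_of_finrank_eq_succ hW
  have : Nontrivial W := Module.nontrivial_of_finrank_eq_succ hW
  obtain ⟨x, hx⟩ := exists_ne (0 : W)
  obtain ⟨y, hxy⟩ := exists_linearIndependent_pair_of_one_lt_finrank (R := K) (by omega) hx
  refine ⟨x, y, LinearIndependent.pair_iff.mpr fun s t hst => ?_, x.2, y.2⟩
  exact LinearIndependent.pair_iff.mp hxy s t (by ext; simpa using hst)

lemma span_pair_eq_of_finrank_eq_two {W : Submodule K V} (hW : finrank K W = 2) {x y : V}
    (h : LinearIndependent K ![x, y]) (hx : x ∈ W) (hy : y ∈ W) :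
    Submodule.span K {x, y} = W := by
  have : Module.Finite K W := Module.finite_of_finrank_eq_succ hW
  refine Submodule.eq_of_le_of_finrank_eq ?_ (by rw [finrank_span_pair h, hW])
  simp [Submodule.span_le, Set.insert_subset_iff, hx, hy]

end LinearAlgebra

section FiniteField

variable {F : Type*} [Field F] [Fintype F] {q : ℕ}

lemma two_le_of_card_eq_sq (hF : Fintype.card F = q ^ 2) : 2 ≤ q := by
  have := Fintype.one_lt_card (α := F)
  by_contra! h
  interval_cases q <;> simp_all

lemma pow_pow_eq_self_of_card_eq_sq (hF : Fintype.card F = q ^ 2) (x : F) : (x ^ q) ^ q = x := by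
  rw [← pow_mul, ← sq, ← hF, FiniteField.pow_card]

lemma exists_pow_add_self_ne_zero (hF : Fintype.card F = q ^ 2) : ∃ μ : F, μ ^ q + μ ≠ 0 := by
  have hq := two_le_of_card_eq_sq hF
  have hdeg : (X ^ q + X : F[X]).natDegree = q := by
    rw [natDegree_add_eq_left_of_natDegree_lt (by rw [natDegree_X, natDegree_X_pow]; omega),
      natDegree_X_pow]
  by_contra! h
  have h0 := eq_zero_of_natDegree_lt_card_of_eval_eq_zero (X ^ q + X) Function.injective_id
    (by simpa using h) (by rw [hdeg, hF]; nlinarith)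
  rw [h0, natDegree_zero] at hdeg
  omega

lemma ncard_pow_succ_eq (hF : Fintype.card F = q ^ 2) {m : F} (hm0 : m ≠ 0) (hmq : m ^ q = m) :
    {x : F | x ^ (q + 1) = m}.ncard = q + 1 := by
  classical
  have hq := two_le_of_card_eq_sq hF
  have : NeZero (q - 1) := ⟨by omega⟩
  obtain ⟨g, hg⟩ := IsCyclic.exists_ofOrder_eq_natCard (α := Fˣ)
  have hcard : orderOf g = (q + 1) * (q - 1) := by
    rw [hg, Nat.card_eq_fintype_card, Fintype.card_units, hF, ← Nat.sq_sub_sq, one_pow]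
  have hg : IsPrimitiveRoot (g : F) ((q + 1) * (q - 1)) :=
    IsPrimitiveRoot.coe_units_iff.mpr (hcard ▸ IsPrimitiveRoot.orderOf g)
  have hpos : 0 < (q + 1) * (q - 1) := Nat.mul_pos (by omega) (by omega)
  have hroots : IsPrimitiveRoot ((g : F) ^ (q - 1)) (q + 1) := hg.pow hpos (mul_comm _ _)
  obtain ⟨i, -, hi⟩ := (hg.pow hpos rfl).eq_pow_of_pow_eq_one (ξ := m) (by
    refine mul_right_cancel₀ hm0 ?_
    rw [← pow_succ, Nat.sub_add_cancel (by omega), hmq, one_mul])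
  have hm : ∃ α, α ^ (q + 1) = m := ⟨g ^ i, by rw [← hi, ← pow_mul, ← pow_mul, mul_comm]⟩
  have : {x : F | x ^ (q + 1) = m} = ↑(nthRootsFinset (q + 1) m) := by
    ext; simp
  rw [this, Set.ncard_coe_finset, nthRootsFinset_def,
    Multiset.toFinset_card_of_nodup (hroots.nthRoots_nodup hm0), hroots.card_nthRoots, if_pos hm]

end FiniteField

section Form

variable {F : Type} [Field F]

def hermBilin : LinearMap.BilinForm F (Fin 3 → F) :=
  Matrix.toBilin' !![-1, 0, 0; 0, 0, 1; 0, 1, 0]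

lemma hermBilin_apply (x y : Fin 3 → F) :
    hermBilin x y = x 1 * y 2 + x 2 * y 1 - x 0 * y 0 := by
  simp [hermBilin, Matrix.toBilin'_apply', dotProduct, Fin.sum_univ_three, Matrix.mulVec]
  ring

lemma hermBilin_nondegenerate : (hermBilin : LinearMap.BilinForm F (Fin 3 → F)).Nondegenerate :=
  (Matrix.nondegenerate_of_det_ne_zero (by simp [Matrix.det_fin_three])).toBilin'

/-- `x ^ q` is the coordinatewise power, so `hermForm q` is sesquilinear for `a ↦ a ^ q`. -/
def hermForm (q : ℕ) (x y : Fin 3 → F) : F :=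
  hermBilin (x ^ q) y

lemma hermForm_apply (q : ℕ) (x y : Fin 3 → F) :
    hermForm q x y = x 1 ^ q * y 2 + x 2 ^ q * y 1 - x 0 ^ q * y 0 := by
  simp [hermForm, hermBilin_apply]

lemma hermForm_self (q : ℕ) (x : Fin 3 → F) : hermForm q x x = hermEq q x := by
  rw [hermForm_apply, hermEq]
  ring

lemma hermEq_smul (q : ℕ) (a : F) (x : Fin 3 → F) :
    hermEq q (a • x) = a ^ (q + 1) * hermEq q x := by
  simp only [hermEq, Pi.smul_apply, smul_eq_mul, mul_pow]
  ring

variable {p : ℕ} [Fact p.Prime] [CharP F p] {e : ℕ}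

lemma hermEq_smul_add_smul (s t : F) (x y : Fin 3 → F) :
    hermEq (p ^ e) (s • x + t • y) =
      s ^ (p ^ e + 1) * hermEq (p ^ e) x + s ^ p ^ e * t * hermForm (p ^ e) x y
        + t ^ p ^ e * s * hermForm (p ^ e) y x + t ^ (p ^ e + 1) * hermEq (p ^ e) y := by
  simp only [hermEq, hermForm_apply, Pi.add_apply, Pi.smul_apply, smul_eq_mul,
    add_pow_char_pow, mul_pow, pow_succ]
  ring

variable [Fintype F]

lemma hermForm_pow (hF : Fintype.card F = (p ^ e) ^ 2) (x y : Fin 3 → F) :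
    hermForm (p ^ e) x y ^ p ^ e = hermForm (p ^ e) y x := by
  simp only [hermForm_apply, sub_pow_char_pow, add_pow_char_pow, mul_pow,
    pow_pow_eq_self_of_card_eq_sq hF]
  ring

lemma hermEq_pow (hF : Fintype.card F = (p ^ e) ^ 2) (x : Fin 3 → F) :
    hermEq (p ^ e) x ^ p ^ e = hermEq (p ^ e) x := by
  rw [← hermForm_self, hermForm_pow hF]

lemma linearIndependent_pow_pair (hF : Fintype.card F = (p ^ e) ^ 2) {x y : Fin 3 → F}
    (h : LinearIndependent F ![x, y]) : LinearIndependent F ![x ^ p ^ e, y ^ p ^ e] := by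
  rw [LinearIndependent.pair_iff] at h ⊢
  intro s t hst
  have hq : p ^ e ≠ 0 := pow_ne_zero _ (Fact.out : p.Prime).ne_zero
  have : s ^ p ^ e • x + t ^ p ^ e • y = 0 := by
    funext i
    simpa [add_pow_char_pow, mul_pow, pow_pow_eq_self_of_card_eq_sq hF, zero_pow hq]
      using congrArg (· ^ p ^ e) (congrFun hst i)
  simpa [pow_eq_zero_iff hq] using h _ _ this

lemma hermForm_ne_zero_of_isotropic (hF : Fintype.card F = (p ^ e) ^ 2) {x y : Fin 3 → F}
    (h : LinearIndependent F ![x, y]) (hx : hermEq (p ^ e) x = 0) (hy : hermEq (p ^ e) y = 0) :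
    hermForm (p ^ e) x y ≠ 0 := by
  intro hxy
  have hyx : hermForm (p ^ e) y x = 0 := by
    rw [← hermForm_pow hF, hxy, zero_pow (pow_ne_zero _ (Fact.out : p.Prime).ne_zero)]
  -- `span {x, y}` would lie in the orthogonal of the plane `U`, which is a line
  set U := Submodule.span F {x ^ p ^ e, y ^ p ^ e}
  have hortho : ∀ z, hermForm (p ^ e) x z = 0 → hermForm (p ^ e) y z = 0 →
      z ∈ hermBilin.orthogonal U := by
    intro z hxz hyz
    refine LinearMap.BilinForm.mem_orthogonal_iff.mpr fun n hn => ?_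
    obtain ⟨r, s, rfl⟩ := Submodule.mem_span_pair.mp hn
    simp_all [hermForm]
  have hle : Submodule.span F {x, y} ≤ hermBilin.orthogonal U := by
    rw [Submodule.span_le, Set.insert_subset_iff, Set.singleton_subset_iff]
    exact ⟨hortho x (by rw [hermForm_self, hx]) hyx, hortho y hxy (by rw [hermForm_self, hy])⟩
  have := Submodule.finrank_mono hle
  rw [finrank_span_pair h, LinearMap.BilinForm.finrank_orthogonal hermBilin_nondegenerate,
    finrank_span_pair (linearIndependent_pow_pair hF h), finrank_fin_fun] at this
  omega

lemma exists_mem_hermEq_ne_zero (hF : Fintype.card F = (p ^ e) ^ 2)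
    {W : Submodule F (Fin 3 → F)} (hW : finrank F W = 2) : ∃ x ∈ W, hermEq (p ^ e) x ≠ 0 := by
  obtain ⟨x, y, hxy, hx, hy⟩ := exists_linearIndependent_pair_mem hW
  by_contra! h
  have hB := hermForm_ne_zero_of_isotropic hF hxy (h x hx) (h y hy)
  obtain ⟨μ, hμ⟩ := exists_pow_add_self_ne_zero hF
  -- with `c = μ / hermForm x y`, `hermEq (x + c y) = μ + μ ^ q`
  have hxcy := h (1 • x + (μ / hermForm (p ^ e) x y) • y)
    (W.add_mem (W.smul_mem _ hx) (W.smul_mem _ hy))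
  rw [hermEq_smul_add_smul, h x hx, h y hy, ← hermForm_pow hF x y] at hxcy
  apply hμ
  rw [← hxcy, div_pow]
  field_simp
  ring

lemma exists_diagonalizing_pair (hF : Fintype.card F = (p ^ e) ^ 2)
    {W : Submodule F (Fin 3 → F)} (hW : finrank F W = 2) :
    ∃ v u : Fin 3 → F, LinearIndependent F ![v, u] ∧ Submodule.span F {v, u} = W ∧
      hermEq (p ^ e) u ≠ 0 ∧ ∀ s t : F, hermEq (p ^ e) (s • v + t • u) =
        s ^ (p ^ e + 1) * hermEq (p ^ e) v + t ^ (p ^ e + 1) * hermEq (p ^ e) u := by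
  obtain ⟨u, huW, hu⟩ := exists_mem_hermEq_ne_zero hF hW
  have : Module.Finite F W := Module.finite_of_finrank_eq_succ hW
  -- a nonzero `v ∈ W` in the kernel of the linear functional `hermForm u`
  obtain ⟨⟨v, hvW⟩, hv, hv0⟩ := Submodule.exists_mem_ne_zero_of_ne_bot
    (LinearMap.ker_ne_bot_of_finrank_lt (f := (hermBilin (u ^ p ^ e)).domRestrict W)
      (by simp [hW]))
  replace hv : hermForm (p ^ e) u v = 0 := hv
  replace hv0 : v ≠ 0 := by simpa using hv0
  have hvu : hermForm (p ^ e) v u = 0 := by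
    rw [← hermForm_pow hF, hv, zero_pow (pow_ne_zero _ (Fact.out : p.Prime).ne_zero)]
  have hli : LinearIndependent F ![v, u] := by
    refine (LinearIndependent.pair_iff' hv0).mpr fun a hau => hu ?_
    calc hermEq (p ^ e) u = hermForm (p ^ e) u (a • v) := by rw [hau, hermForm_self]
      _ = a * hermForm (p ^ e) u v := by simp [hermForm]
      _ = 0 := by rw [hv, mul_zero]
  refine ⟨v, u, hli, span_pair_eq_of_finrank_eq_two hW hli hvW huW, hu, fun s t => ?_⟩
  rw [hermEq_smul_add_smul, hv, hvu]
  ring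

end Form

section ProjectiveLine

variable {K V : Type*} [Field K] [AddCommGroup V] [Module K V] {v u : V}

lemma ne_zero_of_linearIndependent_pair (h : LinearIndependent K ![v, u]) : v ≠ 0 :=
  h.ne_zero 0

lemma smul_add_ne_zero (h : LinearIndependent K ![v, u]) (x : K) : x • v + u ≠ 0 := fun h0 =>
  one_ne_zero (LinearIndependent.pair_iff.mp h x 1 (by rwa [one_smul])).2

def lineChart (h : LinearIndependent K ![v, u]) (x : K) : ℙ K V :=
  Projectivization.mk K (x • v + u) (smul_add_ne_zero h x)

lemma lineChart_injective (h : LinearIndependent K ![v, u]) :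
    Function.Injective (lineChart h) := by
  intro x y hxy
  obtain ⟨a, ha⟩ := (Projectivization.mk_eq_mk_iff K _ _ _ _).mp hxy
  rw [Units.smul_def] at ha
  obtain ⟨hx, ha1⟩ := LinearIndependent.pair_iff.mp h ((a : K) * y - x) ((a : K) - 1)
    (by linear_combination (norm := module) ha)
  linear_combination -hx + y * ha1

lemma mk_smul_add_smul_eq_lineChart (h : LinearIndependent K ![v, u]) {s t : K} (ht : t ≠ 0)
    (hst : s • v + t • u ≠ 0) :
    Projectivization.mk K (s • v + t • u) hst = lineChart h (s / t) := by
  rw [lineChart, Projectivization.mk_eq_mk_iff']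
  exact ⟨t, by rw [smul_add, smul_smul, mul_div_cancel₀ _ ht]⟩

lemma rep_mk_mem_iff {W : Submodule K V} {z : V} (hz : z ≠ 0) :
    (Projectivization.mk K z hz).rep ∈ W ↔ z ∈ W := by
  obtain ⟨a, ha⟩ := Projectivization.exists_smul_eq_mk_rep K z hz
  rw [← ha, Submodule.smul_mem_iff']

end ProjectiveLine

section Points

variable {F : Type} [Field F] {q : ℕ} {W : Submodule F (Fin 3 → F)} {v u : Fin 3 → F}

def hermitianPoints (q : ℕ) (W : Submodule F (Fin 3 → F)) : Set (ℙ F (Fin 3 → F)) :=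
  {P | P.rep ∈ W ∧ hermEq q P.rep = 0}

lemma mk_mem_hermitianPoints_iff {z : Fin 3 → F} (hz : z ≠ 0) :
    Projectivization.mk F z hz ∈ hermitianPoints q W ↔ z ∈ W ∧ hermEq q z = 0 := by
  obtain ⟨a, ha⟩ := Projectivization.exists_smul_eq_mk_rep F z hz
  rw [hermitianPoints, Set.mem_ofPred_eq, rep_mk_mem_iff, ← ha, Units.smul_def, hermEq_smul]
  simp

lemma hermitianPoints_eq_singleton (h : LinearIndependent F ![v, u])
    (hW : Submodule.span F {v, u} = W) {b : F} (hb : b ≠ 0)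
    (hH : ∀ s t : F, hermEq q (s • v + t • u) = t ^ (q + 1) * b) :
    hermitianPoints q W = {Projectivization.mk F v (ne_zero_of_linearIndependent_pair h)} := by
  ext P
  constructor
  · rintro ⟨hPW, hP⟩
    obtain ⟨s, t, hst⟩ := Submodule.mem_span_pair.mp (hW ▸ hPW)
    rw [← hst, hH] at hP
    obtain rfl : t = 0 := by simpa [hb] using hP
    rw [Set.mem_singleton_iff, ← Projectivization.mk_rep P, Projectivization.mk_eq_mk_iff']
    exact ⟨s, by simpa using hst⟩
  · rintro rfl
    rw [mk_mem_hermitianPoints_iff]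
    exact ⟨hW ▸ Submodule.subset_span (by simp), by simpa using hH 1 0⟩

lemma hermitianPoints_eq_image_lineChart (h : LinearIndependent F ![v, u])
    (hW : Submodule.span F {v, u} = W) {a b : F} (ha : a ≠ 0)
    (hH : ∀ s t : F, hermEq q (s • v + t • u) = s ^ (q + 1) * a + t ^ (q + 1) * b) :
    hermitianPoints q W = lineChart h '' {x | x ^ (q + 1) = -b / a} := by
  ext P
  constructor
  · rintro ⟨hPW, hP⟩
    obtain ⟨s, t, hst⟩ := Submodule.mem_span_pair.mp (hW ▸ hPW)
    rw [← hst, hH] at hP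
    have ht : t ≠ 0 := by
      rintro rfl
      obtain rfl : s = 0 := by simpa [ha] using hP
      exact P.rep_nonzero (by simp [← hst])
    refine ⟨s / t, ?_, ?_⟩
    · rw [Set.mem_ofPred_eq, div_pow, eq_div_iff ha, div_mul_eq_mul_div,
        div_eq_iff (pow_ne_zero _ ht)]
      linear_combination hP
    · rw [← mk_smul_add_smul_eq_lineChart h ht (hst ▸ P.rep_nonzero)]
      simp_rw [hst, Projectivization.mk_rep]
  · rintro ⟨x, hx, rfl⟩
    rw [lineChart, mk_mem_hermitianPoints_iff]
    refine ⟨hW ▸ Submodule.mem_span_pair.mpr ⟨x, 1, by rw [one_smul]⟩, ?_⟩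
    rw [← one_smul F u, hH, Set.mem_ofPred_eq.mp hx]
    field_simp
    ring

end Points

end Hermitian

open Hermitian in
theorem line_meets_hermitian_general (p e q : ℕ) (hp : p.Prime) (hq : q = p ^ e)
    (F : Type) [Field F] [Fintype F] [CharP F p] (hF : Fintype.card F = q ^ 2)
    (W : Submodule F (Fin 3 → F)) (hW : Module.finrank F W = 2) :
    Nat.card {P : Projectivization F (Fin 3 → F) // P.rep ∈ W ∧ hermEq q P.rep = 0}
        = q + 1 ∨
    (∃ P : Projectivization F (Fin 3 → F), P.rep ∈ W ∧ hermEq q P.rep = 0 ∧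
      {Q : Projectivization F (Fin 3 → F) | Q.rep ∈ W ∧ hermEq q Q.rep = 0} = {P} ∧
      ∃ (u w : Fin 3 → F) (hu : u ≠ 0) (c : F),
        LinearIndependent F ![u, w] ∧ Submodule.span F {u, w} = W ∧
        Projectivization.mk F u hu = P ∧ c ≠ 0 ∧
        ∀ s t : F, hermEq q (s • u + t • w) = c * t ^ (q + 1)) := by
  subst hq
  have : Fact p.Prime := ⟨hp⟩
  obtain ⟨v, u, hvu, hspan, hu, hH⟩ := exists_diagonalizing_pair hF hW
  by_cases hv : hermEq (p ^ e) v = 0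
  · right
    have hP := hermitianPoints_eq_singleton hvu hspan hu (by simpa [hv] using hH)
    have hmem : _ ∈ hermitianPoints (p ^ e) W := hP ▸ Set.mem_singleton _
    exact ⟨_, hmem.1, hmem.2, hP, v, u, ne_zero_of_linearIndependent_pair hvu, hermEq (p ^ e) u,
      hvu, hspan, rfl, hu, fun s t => by rw [hH, hv]; ring⟩
  · left
    have hm : (-hermEq (p ^ e) u / hermEq (p ^ e) v) ^ p ^ e =
        -hermEq (p ^ e) u / hermEq (p ^ e) v := by
      rw [div_pow, neg_pow, neg_one_pow_char_pow, hermEq_pow hF, hermEq_pow hF, neg_one_mul]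
    change Nat.card (hermitianPoints (p ^ e) W) = _
    rw [Nat.card_coe_set_eq, hermitianPoints_eq_image_lineChart hvu hspan hv hH,
      Set.ncard_image_of_injective _ (lineChart_injective hvu),
      ncard_pow_succ_eq hF (div_ne_zero (neg_ne_zero.mpr hu) hv) hm]

/-- Every line of `P²(F_{q²})` (given by a 2-dimensional subspace `W ⊆ F³`) either
meets the Hermitian curve in exactly `q+1` rational points, or it is tangent to it at
a point `P` with contact order `q+1` (the restriction of the curve equation to a
parametrization of the line based at `P` is `c·t^(q+1)`) and meets the curve in no
rational point other than `P`. -/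
theorem line_meets_hermitian (p e q : ℕ) (hp : p.Prime) (hq : q = p ^ e) (he : 0 < e)
    (F : Type) [Field F] [Fintype F] [CharP F p] (hF : Fintype.card F = q ^ 2)
    (W : Submodule F (Fin 3 → F)) (hW : Module.finrank F W = 2) :
    Nat.card {P : Projectivization F (Fin 3 → F) // P.rep ∈ W ∧ hermEq q P.rep = 0}
        = q + 1 ∨
    (∃ P : Projectivization F (Fin 3 → F), P.rep ∈ W ∧ hermEq q P.rep = 0 ∧
      {Q : Projectivization F (Fin 3 → F) | Q.rep ∈ W ∧ hermEq q Q.rep = 0} = {P} ∧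
      ∃ (u w : Fin 3 → F) (hu : u ≠ 0) (c : F),
        LinearIndependent F ![u, w] ∧ Submodule.span F {u, w} = W ∧
        Projectivization.mk F u hu = P ∧ c ≠ 0 ∧
        ∀ s t : F, hermEq q (s • u + t • w) = c * t ^ (q + 1)) :=
  line_meets_hermitian_general p e q hp hq F hF W hW
end

section
/- Let d ≤ q−1 be a positive integer and 1 ≤ a ≤ d. The number of minimum-weight codewords of the dual Hermitian code C(d,a)^⊥ is A_δ = (q²−1)·q²·C(q, d+1), where δ = d+1 is the minimum distance and C(q, d+1) is a binomial coefficient. Equivalently, the supports of minimum-weight codewords are exactly the (d+1)-subsets of the q affine rational points on a non-tangent line through P_∞, there are q²·C(q,d+1) such supports, and each support carries exactly q²−1 minimum-weight codewords. -/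
/-!
A dual word `w` is orthogonal to every `f(x) g(y)` whose pole order `deg f · q + deg g · (q+1)`
at `P_∞` is at most `d(q+1) - a`. Pick `P₀` in the support of a nonzero dual word on a least
populated vertical line, let `f` vanish at the other abscissae of the support and `g` at the other
points of that line: `f(x) g(y)` meets the support only in `P₀`, which forces the support to have at
least `d + 1` points, and exactly `d + 1` only when it lies on one vertical line.

On a vertical line, being dual amounts to the `d` power-sum conditions `∑ w_P y_P^j = 0` (`j < d`),
so every `(d+1)`-subset of the `q` points of a line supports a dual word, and, minimum-weight words
with equal supports being proportional, exactly `q² - 1` of them.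
-/

/-- The affine rational points `B` of the Hermitian curve `y^q + y = x^(q+1)`. -/
abbrev hermB (F : Type) [Field F] (q : ℕ) : Type :=
  {P : F × F // P.2 ^ q + P.2 = P.1 ^ (q + 1)}

noncomputable instance (F : Type) [Field F] [Fintype F] (q : ℕ) : Fintype (hermB F q) :=
  Fintype.ofFinite _

/-- The Hermitian one-point code `C(d,a)`: the evaluation at the affine rational points
of the space of degree-`d` forms on `X` vanishing to order `a` at `P_∞`, spanned by the
monomials `x^i y^j` with `0 ≤ j ≤ q-1` and `iq + j(q+1) ≤ m`, `m = d(q+1) - a`. -/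
noncomputable def hermCode (F : Type) [Field F] (q d a : ℕ) :
    Submodule F (hermB F q → F) :=
  Submodule.span F {f | ∃ i j : ℕ, j ≤ q - 1 ∧ i * q + j * (q + 1) ≤ d * (q + 1) - a ∧
    f = fun P => P.1.1 ^ i * P.1.2 ^ j}

open Finset in
/-- The dual code of a linear code `C ⊆ F^ι`. -/
def dualCode {F : Type} [Field F] {ι : Type} [Fintype ι] (C : Submodule F (ι → F)) :
    Submodule F (ι → F) where
  carrier := {v | ∀ c ∈ C, ∑ i, v i * c i = 0}
  zero_mem' := by intro c hc; simp
  add_mem' := by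
    intro a b ha hb c hc
    have h : ∑ i, (a + b) i * c i = ∑ i, (a i * c i + b i * c i) := by
      apply Finset.sum_congr rfl; intro i _; simp [add_mul]
    rw [h, Finset.sum_add_distrib, ha c hc, hb c hc, add_zero]
  smul_mem' := by
    intro r a ha c hc
    have h : ∑ i, (r • a) i * c i = r * ∑ i, a i * c i := by
      rw [Finset.mul_sum]; apply Finset.sum_congr rfl; intro i _; simp [mul_assoc]
    rw [h, ha c hc, mul_zero]

/-- The Hamming weight of a word. -/
noncomputable def wt {F : Type} [Field F] {ι : Type} (w : ι → F) : ℕ :=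
  Nat.card {i : ι // w i ≠ 0}

open Finset Polynomial

section LinearCode

variable {F ι : Type} [Field F] [Fintype ι]

theorem mem_dualCode_span {G : Set (ι → F)} {w : ι → F} :
    w ∈ dualCode (Submodule.span F G) ↔ ∀ g ∈ G, ∑ i, w i * g i = 0 := by
  refine ⟨fun h g hg => h g (Submodule.subset_span hg), fun h c hc => ?_⟩
  induction hc using Submodule.span_induction with
  | mem g hg => exact h g hg
  | zero => simp
  | add x y _ _ hx hy => simp [mul_add, sum_add_distrib, hx, hy]
  | smul r x _ hx => simp [mul_left_comm _ r, ← mul_sum, hx]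

theorem apply_eq_zero_of_mem_dualCode {C : Submodule F (ι → F)} {w c : ι → F}
    (hw : w ∈ dualCode C) (hc : c ∈ C) {i₀ : ι} (hci₀ : c i₀ ≠ 0)
    (hvan : ∀ i ≠ i₀, w i ≠ 0 → c i = 0) : w i₀ = 0 := by
  have hsum : ∑ i, w i * c i = w i₀ * c i₀ := by
    refine sum_eq_single i₀ (fun i _ hi => ?_) (by simp)
    by_cases hwi : w i = 0
    · simp [hwi]
    · simp [hvan i hi hwi]
  have hpair := hw c hc
  rw [hsum] at hpair
  exact (mul_eq_zero.mp hpair).resolve_right hci₀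

variable [DecidableEq F]

def wordSupport (w : ι → F) : Finset ι := {i | w i ≠ 0}

@[simp]
theorem mem_wordSupport {w : ι → F} {i : ι} : i ∈ wordSupport w ↔ w i ≠ 0 := by
  simp [wordSupport]

theorem wt_eq_card_wordSupport (w : ι → F) : wt w = #(wordSupport w) := by
  rw [wt, Nat.card_eq_fintype_card, Fintype.card_subtype]
  rfl

theorem wordSupport_smul {t : F} (ht : t ≠ 0) (w : ι → F) :
    wordSupport (t • w) = wordSupport w := by
  ext i
  simp [ht]

theorem eq_smul_of_wordSupport_subset {C : Submodule F (ι → F)} {δ : ℕ}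
    (hmin : ∀ w ∈ C, w ≠ 0 → δ ≤ #(wordSupport w)) {w w' : ι → F} (hw : w ∈ C)
    (hw' : w' ∈ C) (hcard : #(wordSupport w) = δ) (hsub : wordSupport w' ⊆ wordSupport w)
    {i₀ : ι} (hi₀ : i₀ ∈ wordSupport w) : w' = (w' i₀ / w i₀) • w := by
  classical
  have hwi₀ : w i₀ ≠ 0 := mem_wordSupport.mp hi₀
  set u := w' - (w' i₀ / w i₀) • w
  have hu : wordSupport u ⊆ (wordSupport w).erase i₀ := by
    intro i hi
    have hui : u i ≠ 0 := mem_wordSupport.mp hi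
    refine mem_erase.mpr ⟨?_, ?_⟩
    · rintro rfl
      exact hui (by simp [u, hwi₀])
    · by_contra hwi
      have hw'i : w' i = 0 := by simpa using mt (@hsub i) hwi
      exact hui (by simp_all [u])
  have hu0 : u = 0 := by
    by_contra hne
    have := (hmin u (C.sub_mem hw' (C.smul_mem _ hw)) hne).trans (card_le_card hu)
    rw [card_erase_of_mem hi₀, hcard] at this
    have : 0 < δ := hcard ▸ card_pos.mpr ⟨i₀, hi₀⟩
    omega
  exact sub_eq_zero.mp hu0

theorem card_filter_wordSupport_eq [Fintype F] [DecidableEq ι] {C : Submodule F (ι → F)}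
    [DecidablePred (· ∈ C)] {δ : ℕ} (hmin : ∀ w ∈ C, w ≠ 0 → δ ≤ #(wordSupport w))
    {w₀ : ι → F} (hw₀ : w₀ ∈ C) (hw₀0 : w₀ ≠ 0) (hcard : #(wordSupport w₀) = δ) :
    #{w | w ∈ C ∧ wordSupport w = wordSupport w₀} = Fintype.card F - 1 := by
  obtain ⟨i₀, hi₀⟩ : (wordSupport w₀).Nonempty := by
    obtain ⟨i, hi⟩ := Function.ne_iff.mp hw₀0
    exact ⟨i, mem_wordSupport.mpr hi⟩
  have hfilter : ({w | w ∈ C ∧ wordSupport w = wordSupport w₀} : Finset (ι → F))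
      = ((univ : Finset F).erase 0).image (· • w₀) := by
    ext w
    simp only [mem_filter, mem_univ, true_and, mem_image, mem_erase, ne_eq, and_true]
    constructor
    · rintro ⟨hwC, hsupp⟩
      refine ⟨w i₀ / w₀ i₀, ?_, (eq_smul_of_wordSupport_subset hmin hw₀ hwC hcard
        hsupp.le hi₀).symm⟩
      have : w i₀ ≠ 0 := mem_wordSupport.mp (hsupp ▸ hi₀)
      exact div_ne_zero this (mem_wordSupport.mp hi₀)
    · rintro ⟨t, ht, rfl⟩
      exact ⟨C.smul_mem t hw₀, wordSupport_smul ht w₀⟩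
  rw [hfilter, card_image_of_injective _ (smul_left_injective F hw₀0),
    card_erase_of_mem (mem_univ 0), card_univ]

theorem exists_ne_zero_wordSupport_subset_sum_mul_pow_eq_zero (y : ι → F) {S : Finset ι}
    {d : ℕ} (hS : d < #S) :
    ∃ w : ι → F, w ≠ 0 ∧ wordSupport w ⊆ S ∧ ∀ j < d, ∑ i, w i * y i ^ j = 0 := by
  classical
  let φ : (S → F) →ₗ[F] (Fin d → F) :=
    Matrix.mulVecLin (Matrix.of fun (j : Fin d) (i : S) => y i ^ (j : ℕ))
  obtain ⟨v, hv, hv0⟩ := Submodule.exists_mem_ne_zero_of_ne_bot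
    (LinearMap.ker_ne_bot_of_finrank_lt (f := φ) (by simpa using hS))
  let w : ι → F := fun i => if h : i ∈ S then v ⟨i, h⟩ else 0
  have hwS : wordSupport w ⊆ S := fun i hi => by
    by_contra h
    exact mem_wordSupport.mp hi (dif_neg h)
  refine ⟨w, fun hw => hv0 (funext fun i => ?_), hwS, fun j hj => ?_⟩
  · simpa [w] using congrFun hw i
  · have hφ := congrFun (LinearMap.mem_ker.mp hv) ⟨j, hj⟩
    rw [← sum_subset (subset_univ S) fun i _ hi => by simp [w, hi], ← sum_coe_sort]
    simpa [φ, Matrix.mulVec, dotProduct, w, mul_comm] using hφ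

end LinearCode

theorem AddMonoidHom.card_fiber_eq_of_card_eq_mul {G H : Type} [AddGroup G] [Fintype G]
    [AddGroup H] [DecidableEq H] (L : G →+ H) {R : Finset H} {m n : ℕ}
    (hG : Fintype.card G = m * n) (hker : #{g | L g = 0} ≤ m) (hR : ∀ g, L g ∈ R)
    (hRn : #R ≤ n) {z : H} (hz : z ∈ R) : #{g | L g = z} = m := by
  have hfiber : ∀ y ∈ univ.image L, #{g | L g = y} = #{g | L g = 0} := fun y hy =>
    card_fiber_eq_of_mem_range L (by simpa using hy) ⟨0, map_zero L⟩
  have himage : univ.image L ⊆ R := by simpa [subset_iff] using hR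
  have hcount : m * n = #(univ.image L) * #{g | L g = 0} := by
    rw [← hG, ← card_univ, card_eq_sum_card_image L, sum_congr rfl hfiber, sum_const,
      smul_eq_mul]
  have hpos : 0 < #{g | L g = 0} := card_pos.mpr ⟨0, by simp⟩
  have himage_le := (card_le_card himage).trans hRn
  have hn : 0 < n := (card_pos.mpr (univ_nonempty.image L)).trans_le himage_le
  have hker_eq : #{g | L g = 0} = m := by
    refine le_antisymm hker (Nat.le_of_mul_le_mul_left ?_ hn)
    calc n * m = #(univ.image L) * #{g | L g = 0} := by rw [← hcount, mul_comm]
      _ ≤ n * #{g | L g = 0} := Nat.mul_le_mul_right _ himage_le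
  have himage_eq : univ.image L = R := by
    refine eq_of_subset_of_card_le himage (hRn.trans (Nat.le_of_mul_le_mul_right ?_ hpos))
    rw [← hcount, hker_eq, mul_comm]
  rw [hfiber z (himage_eq ▸ hz), hker_eq]

theorem card_filter_isRoot_le {F : Type} [Field F] [Fintype F] [DecidableEq F] {f : F[X]}
    (hf : f ≠ 0) : #{x | f.IsRoot x} ≤ f.natDegree :=
  card_le_degree_of_subset_roots fun x hx => by simp_all

/-- `r * q + (n - 1) * (q + 1)` is the pole order of `x ^ r * y ^ (n - 1)` at `P_∞`. -/
theorem pole_order_le {q d a n r : ℕ} (hd : d ≤ q - 1) (had : a ≤ d) (hn : 1 ≤ n)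
    (hnr : n * (r + 1) ≤ d + 1) (hr : r = 0 → n ≤ d) :
    n - 1 ≤ q - 1 ∧ r * q + (n - 1) * (q + 1) ≤ d * (q + 1) - a := by
  obtain ⟨k, rfl⟩ : ∃ k, n = k + 1 := ⟨n - 1, by omega⟩
  have hnd : k + 1 ≤ d := by
    rcases Nat.eq_zero_or_pos r with rfl | hr0
    · exact hr rfl
    · nlinarith
  refine ⟨by omega, Nat.le_sub_of_add_le ?_⟩
  rw [Nat.add_sub_cancel]
  have haq : a ≤ q + 1 := by omega
  rcases Nat.eq_zero_or_pos r with rfl | hr0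
  · nlinarith [Nat.mul_le_mul_right (q + 1) hnd]
  rcases Nat.eq_zero_or_pos k with rfl | hk0
  · nlinarith
  have hrkd : r + k + 1 ≤ d := by nlinarith
  nlinarith [Nat.mul_le_mul_right (q + 1) hrkd]

theorem card_filter_add_mul_card_le {α β : Type} [DecidableEq β] {S : Finset α} (f : α → β)
    {x₀ : α} (hx₀ : x₀ ∈ S) {k : ℕ}
    (hk : ∀ b ∈ (S.image f).erase (f x₀), k ≤ #{x ∈ S | f x = b}) :
    #{x ∈ S | f x = f x₀} + k * #((S.image f).erase (f x₀)) ≤ #S := by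
  rw [card_eq_sum_card_image f S, ← add_sum_erase _ _ (mem_image_of_mem f hx₀), mul_comm,
    ← smul_eq_mul]
  exact Nat.add_le_add_left (card_nsmul_le_sum _ _ _ hk) _

noncomputable def verticalLine {F : Type} [Field F] [Fintype F] [DecidableEq F] (q : ℕ)
    (c : F) : Finset (hermB F q) :=
  {P | P.1.1 = c}

section HermitianCode

variable {F : Type} [Field F] {q d a : ℕ}

theorem eval_mul_eval_mem_hermCode {f g : F[X]} (hg : g.natDegree ≤ q - 1)
    (hfg : f.natDegree * q + g.natDegree * (q + 1) ≤ d * (q + 1) - a) :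
    (fun P : hermB F q => f.eval P.1.1 * g.eval P.1.2) ∈ hermCode F q d a := by
  have hexpand : (fun P : hermB F q => f.eval P.1.1 * g.eval P.1.2)
      = ∑ i ∈ range (f.natDegree + 1), ∑ j ∈ range (g.natDegree + 1),
          (f.coeff i * g.coeff j) • fun P : hermB F q => P.1.1 ^ i * P.1.2 ^ j := by
    funext P
    simp only [eval_eq_sum_range, sum_mul_sum, Finset.sum_apply, Pi.smul_apply, smul_eq_mul]
    exact sum_congr rfl fun i _ => sum_congr rfl fun j _ => by ring
  rw [hexpand]
  refine Submodule.sum_mem _ fun i hi => Submodule.sum_mem _ fun j hj => ?_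
  refine Submodule.smul_mem _ _ (Submodule.subset_span ⟨i, j, ?_, ?_, rfl⟩)
  · have := mem_range_succ_iff.mp hj
    omega
  · have := Nat.add_le_add (Nat.mul_le_mul_right q (mem_range_succ_iff.mp hi))
      (Nat.mul_le_mul_right (q + 1) (mem_range_succ_iff.mp hj))
    omega

variable [Fintype F] [DecidableEq F]

theorem card_filter_pow_add_self_eq_zero_le (hq1 : 1 < q) : #{y : F | y ^ q + y = 0} ≤ q := by
  have hdeg : (X : F[X]).natDegree < (X ^ q : F[X]).natDegree := by simpa using hq1
  have hne : (X ^ q + X : F[X]) ≠ 0 :=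
    ne_zero_of_natDegree_gt ((natDegree_add_eq_left_of_natDegree_lt hdeg).symm ▸ hdeg)
  have hroots := card_filter_isRoot_le hne
  rw [natDegree_add_eq_left_of_natDegree_lt hdeg, natDegree_X_pow] at hroots
  simpa using hroots

theorem card_filter_pow_eq_self_le (hq1 : 1 < q) : #{z : F | z ^ q = z} ≤ q := by
  have hroots := card_filter_isRoot_le (FiniteField.X_pow_card_sub_X_ne_zero F hq1)
  rw [FiniteField.X_pow_card_sub_X_natDegree_eq F hq1] at hroots
  simpa [sub_eq_zero] using hroots

/-- `y ↦ y ^ q + y` is additive; its kernel and its image lie in the root sets of `X ^ q + X`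
and `X ^ q - X`, of size at most `q` each, so as `|F| = q²` its image is `{z | z ^ q = z}` and all
its fibres over it have `q` points. -/
theorem card_filter_pow_add_self_eq {p e : ℕ} (hp : p.Prime) (hq : q = p ^ e) [CharP F p]
    (hF : Fintype.card F = q ^ 2) (hq1 : 1 < q) {z : F} (hz : z ^ q = z) :
    #{y : F | y ^ q + y = z} = q := by
  have := Fact.mk hp
  let trace : F →+ F := (iterateFrobenius F p e).toAddMonoidHom + AddMonoidHom.id F
  have htrace (y : F) : trace y = y ^ q + y := by simp [trace, iterateFrobenius_def, hq]
  have hpow_pow (x : F) : (x ^ q) ^ q = x := by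
    rw [← pow_mul, ← sq, ← hF, FiniteField.pow_card]
  have hfixed (y : F) : trace y ∈ ({z : F | z ^ q = z} : Finset F) := by
    simp only [mem_filter, mem_univ, true_and]
    rw [htrace, hq, add_pow_char_pow, ← hq, hpow_pow, add_comm]
  simpa [htrace] using trace.card_fiber_eq_of_card_eq_mul (by rw [hF, sq])
    (by simpa [htrace] using card_filter_pow_add_self_eq_zero_le hq1) hfixed
    (card_filter_pow_eq_self_le hq1) (by simpa using hz)

theorem card_verticalLine {p e : ℕ} (hp : p.Prime) (hq : q = p ^ e) [CharP F p]
    (hF : Fintype.card F = q ^ 2) (hq1 : 1 < q) (c : F) : #(verticalLine q c) = q := by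
  have hnorm : (c ^ (q + 1)) ^ q = c ^ (q + 1) := by
    rw [pow_succ, mul_pow, ← pow_mul, ← sq, ← hF, FiniteField.pow_card, mul_comm]
  refine .trans ?_ (card_filter_pow_add_self_eq hp hq hF hq1 hnorm)
  refine card_bij' (fun P _ => P.1.2) (fun y hy => ⟨(c, y), by simpa using hy⟩)
    (fun P hP => ?_) (fun y _ => by simp [verticalLine]) (fun P hP => ?_) (fun y _ => rfl)
  · simp only [verticalLine, mem_filter, mem_univ, true_and] at hP ⊢
    rw [P.2, hP]
  · simp only [verticalLine, mem_filter, mem_univ, true_and] at hP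
    exact Subtype.ext (Prod.ext hP.symm rfl)

theorem apply_eq_zero_of_mem_dualCode_hermCode {w : hermB F q → F}
    (hw : w ∈ dualCode (hermCode F q d a)) (P₀ : hermB F q)
    (hJ : #{P ∈ wordSupport w | P.1.1 = P₀.1.1} - 1 ≤ q - 1)
    (hpole : #(((wordSupport w).image (·.1.1)).erase P₀.1.1) * q
      + (#{P ∈ wordSupport w | P.1.1 = P₀.1.1} - 1) * (q + 1) ≤ d * (q + 1) - a) :
    w P₀ = 0 := by
  set S := wordSupport w
  set xs := (S.image (·.1.1)).erase P₀.1.1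
  set mates := {P ∈ S | P.1.1 = P₀.1.1}.erase P₀
  by_contra hP₀
  have hcard_mates : #mates = #{P ∈ S | P.1.1 = P₀.1.1} - 1 :=
    card_erase_of_mem (mem_filter.mpr ⟨mem_wordSupport.mpr hP₀, rfl⟩)
  let f := Lagrange.nodal xs id
  let g := Lagrange.nodal mates (·.1.2)
  have hmem := eval_mul_eval_mem_hermCode (q := q) (d := d) (a := a) (f := f) (g := g)
    (by rwa [Lagrange.natDegree_nodal, hcard_mates])
    (by rwa [Lagrange.natDegree_nodal, Lagrange.natDegree_nodal, hcard_mates])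
  refine hP₀ (apply_eq_zero_of_mem_dualCode hw hmem ?_ fun P hP hwP => ?_)
  · refine mul_ne_zero (Lagrange.eval_nodal_not_at_node fun x hx => (mem_erase.mp hx).1.symm)
      (Lagrange.eval_nodal_not_at_node fun P hP hy => (mem_erase.mp hP).1 ?_)
    exact Subtype.ext (Prod.ext (mem_filter.mp (mem_erase.mp hP).2).2 hy.symm)
  by_cases hx : P.1.1 = P₀.1.1
  · have hP : P ∈ mates := mem_erase.mpr ⟨hP, mem_filter.mpr ⟨mem_wordSupport.mpr hwP, hx⟩⟩
    exact mul_eq_zero_of_right _ (Lagrange.eval_nodal_at_node (v := (·.1.2)) hP)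
  · have hx : P.1.1 ∈ xs := mem_erase.mpr ⟨hx, mem_image_of_mem _ (mem_wordSupport.mpr hwP)⟩
    exact mul_eq_zero_of_left (Lagrange.eval_nodal_at_node (v := id) hx) _

theorem card_wordSupport_eq_and_subset_verticalLine (hd : d ≤ q - 1) (had : a ≤ d)
    {w : hermB F q → F} (hw : w ∈ dualCode (hermCode F q d a)) (hw0 : w ≠ 0)
    (hcard : #(wordSupport w) ≤ d + 1) :
    #(wordSupport w) = d + 1 ∧ ∃ c, wordSupport w ⊆ verticalLine q c := by
  set S := wordSupport w
  have hS : S.Nonempty := by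
    obtain ⟨P, hP⟩ := Function.ne_iff.mp hw0
    exact ⟨P, mem_wordSupport.mpr hP⟩
  obtain ⟨P₀, hP₀, hmin⟩ := S.exists_min_image (fun P => #{P' ∈ S | P'.1.1 = P.1.1}) hS
  set n := #{P ∈ S | P.1.1 = P₀.1.1}
  set r := #((S.image (·.1.1)).erase P₀.1.1)
  have hbound : n + n * r ≤ #S := card_filter_add_mul_card_le (·.1.1) hP₀ fun c hc => by
    obtain ⟨P, hP, rfl⟩ := mem_image.mp (mem_erase.mp hc).2
    exact hmin P hP
  by_contra hcon
  have hr : r = 0 → n ≤ d := fun hr0 => by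
    have hline : S ⊆ verticalLine q P₀.1.1 := fun P hP => by
      by_contra hx
      have : P.1.1 ∈ (S.image (·.1.1)).erase P₀.1.1 :=
        mem_erase.mpr ⟨by simpa [verticalLine] using hx, mem_image_of_mem _ hP⟩
      exact (card_pos.mpr ⟨_, this⟩).ne' hr0
    have : #S ≠ d + 1 := fun h => hcon ⟨h, _, hline⟩
    have : n ≤ #S := card_filter_le _ _
    omega
  have hn : 1 ≤ n := card_pos.mpr ⟨P₀, mem_filter.mpr ⟨hP₀, rfl⟩⟩
  obtain ⟨hJ, hpole⟩ := pole_order_le hd had hn (by nlinarith) hr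
  exact mem_wordSupport.mp hP₀ (apply_eq_zero_of_mem_dualCode_hermCode hw P₀ hJ hpole)

theorem mem_dualCode_hermCode_of_subset_verticalLine (ha1 : 1 ≤ a) (had : a ≤ d)
    {w : hermB F q → F} {c : F} (hw : wordSupport w ⊆ verticalLine q c)
    (hpow : ∀ j < d, ∑ P, w P * P.1.2 ^ j = 0) : w ∈ dualCode (hermCode F q d a) := by
  rw [hermCode, mem_dualCode_span]
  rintro _ ⟨i, j, -, hij, rfl⟩
  have hj : j < d := by
    by_contra! hdj
    have := Nat.mul_le_mul_right (q + 1) hdj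
    have : d ≤ d * (q + 1) := Nat.le_mul_of_pos_right d q.succ_pos
    omega
  calc ∑ P, w P * (P.1.1 ^ i * P.1.2 ^ j) = ∑ P, c ^ i * (w P * P.1.2 ^ j) := by
        refine sum_congr rfl fun P _ => ?_
        by_cases hP : w P = 0
        · simp [hP]
        · have hx : P.1.1 = c := by simpa [verticalLine] using hw (mem_wordSupport.mpr hP)
          rw [hx]
          ring
    _ = 0 := by rw [← mul_sum, hpow j hj, mul_zero]

theorem le_card_wordSupport_of_mem_dualCode_hermCode (hd : d ≤ q - 1) (had : a ≤ d)
    {w : hermB F q → F} (hw : w ∈ dualCode (hermCode F q d a)) (hw0 : w ≠ 0) : d + 1 ≤ #(wordSupport w) := by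
  by_contra! h
  exact h.ne (card_wordSupport_eq_and_subset_verticalLine hd had hw hw0 h.le).1

theorem card_filter_wordSupport_eq_of_subset_verticalLine (hd : d ≤ q - 1) (ha1 : 1 ≤ a)
    (had : a ≤ d) [DecidablePred (· ∈ dualCode (hermCode F q d a))] {S : Finset (hermB F q)}
    {c : F} (hS : S ⊆ verticalLine q c) (hcard : #S = d + 1) :
    #{w | w ∈ dualCode (hermCode F q d a) ∧ wordSupport w = S} = Fintype.card F - 1 := by
  obtain ⟨w₀, hw₀0, hw₀S, hpow⟩ :=
    exists_ne_zero_wordSupport_subset_sum_mul_pow_eq_zero (fun P : hermB F q => P.1.2)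
      (hcard ▸ d.lt_succ_self : d < #S)
  have hw₀ := mem_dualCode_hermCode_of_subset_verticalLine ha1 had (hw₀S.trans hS) hpow
  have hmin : ∀ w ∈ dualCode (hermCode F q d a), w ≠ 0 → d + 1 ≤ #(wordSupport w) :=
    fun w => le_card_wordSupport_of_mem_dualCode_hermCode hd had
  have hsupp : wordSupport w₀ = S :=
    eq_of_subset_of_card_le hw₀S (hcard ▸ hmin w₀ hw₀ hw₀0)
  subst hsupp
  exact card_filter_wordSupport_eq hmin hw₀ hw₀0 hcard

theorem card_biUnion_powersetCard_verticalLine (hline : ∀ c : F, #(verticalLine q c) = q)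
    (k : ℕ) : #(univ.biUnion fun c : F => powersetCard (k + 1) (verticalLine q c))
      = Fintype.card F * q.choose (k + 1) := by
  rw [card_biUnion, sum_congr rfl fun c _ => by rw [card_powersetCard, hline], sum_const,
    card_univ, smul_eq_mul]
  intro c _ c' _ hcc'
  refine disjoint_left.mpr fun S hS hS' => hcc' ?_
  obtain ⟨P, hP⟩ := card_pos.mp ((mem_powersetCard.mp hS).2 ▸ k.succ_pos : 0 < #S)
  have hc := mem_filter.mp ((mem_powersetCard.mp hS).1 hP)
  have hc' := mem_filter.mp ((mem_powersetCard.mp hS').1 hP)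
  exact hc.2.symm.trans hc'.2

end HermitianCode

theorem herm_dual_min_weight_count_general (p e q d a : ℕ) (hp : p.Prime) (hq : q = p ^ e)
    (he : 0 < e) (F : Type) [Field F] [Fintype F] [CharP F p] (hF : Fintype.card F = q ^ 2)
    (hd : d ≤ q - 1) (ha1 : 1 ≤ a) (had : a ≤ d) :
    (∀ w ∈ dualCode (hermCode F q d a), w ≠ 0 → d + 1 ≤ wt w) ∧
    Set.ncard {w : hermB F q → F | w ∈ dualCode (hermCode F q d a) ∧ wt w = d + 1}
      = (q ^ 2 - 1) * (q ^ 2 * Nat.choose q (d + 1)) := by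
  classical
  set C := dualCode (hermCode F q d a)
  have hline := card_verticalLine hp hq hF (hq ▸ Nat.one_lt_pow he.ne' hp.one_lt)
  refine ⟨fun w hw hw0 => ?_, ?_⟩
  · rw [wt_eq_card_wordSupport]
    exact le_card_wordSupport_of_mem_dualCode_hermCode hd had hw hw0
  set T := univ.biUnion fun c : F => powersetCard (d + 1) (verticalLine q c)
  have hmaps : ∀ w ∈ ({w | w ∈ C ∧ wt w = d + 1} : Finset _), wordSupport w ∈ T := by
    intro w hw
    obtain ⟨hwC, hwt⟩ := (mem_filter.mp hw).2
    rw [wt_eq_card_wordSupport] at hwt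
    obtain ⟨-, c, hc⟩ := card_wordSupport_eq_and_subset_verticalLine hd had hwC
      (fun h => by simp [h, wordSupport] at hwt) hwt.le
    exact mem_biUnion.mpr ⟨c, mem_univ c, mem_powersetCard.mpr ⟨hc, hwt⟩⟩
  have hfiber : ∀ S ∈ T, #{w ∈ ({w | w ∈ C ∧ wt w = d + 1} : Finset _) | wordSupport w = S}
      = q ^ 2 - 1 := by
    intro S hS
    obtain ⟨c, -, hS⟩ := mem_biUnion.mp hS
    obtain ⟨hSc, hcard⟩ := mem_powersetCard.mp hS
    rw [← hF, ← card_filter_wordSupport_eq_of_subset_verticalLine hd ha1 had hSc hcard,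
      filter_filter]
    congr 1
    ext w
    simp only [mem_filter, mem_univ, true_and, wt_eq_card_wordSupport]
    exact ⟨fun h => ⟨h.1.1, h.2⟩, fun h => ⟨⟨h.1, h.2 ▸ hcard⟩, h.2⟩⟩
  rw [Set.ncard_eq_toFinset_card', Set.toFinset_ofPred, card_eq_sum_card_fiberwise hmaps,
    sum_congr rfl hfiber, sum_const, smul_eq_mul, card_biUnion_powersetCard_verticalLine hline,
    hF, mul_comm]

/-- For `0 < d ≤ q-1` and `1 ≤ a ≤ d`, the minimum distance of `C(d,a)^⊥` is `d+1`
and the number of its minimum-weight codewords is `(q²-1)·q²·binom(q, d+1)`. -/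
theorem herm_dual_min_weight_count (p e q d a : ℕ) (hp : p.Prime) (hq : q = p ^ e)
    (he : 0 < e) (F : Type) [Field F] [Fintype F] [CharP F p] (hF : Fintype.card F = q ^ 2)
    (hd0 : 0 < d) (hd : d ≤ q - 1) (ha1 : 1 ≤ a) (had : a ≤ d) :
    (∀ w ∈ dualCode (hermCode F q d a), w ≠ 0 → d + 1 ≤ wt w) ∧
    Set.ncard {w : hermB F q → F | w ∈ dualCode (hermCode F q d a) ∧ wt w = d + 1}
      = (q ^ 2 - 1) * (q ^ 2 * Nat.choose q (d + 1)) :=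
  herm_dual_min_weight_count_general p e q d a hp hq he F hF hd ha1 had
end

section
/- Let q be odd. The number of smooth conics in P^2 over F_{q^2} passing through P_∞ and tangent to the Hermitian curve X at P_∞ that meet X in exactly 2q affine F_{q^2}-rational points is q²(q+1)(q−1)/2; equivalently, the number of triples (a,b,c) ∈ F_{q^2}³ with a ≠ 0 such that the system y = ax² + bx + c, y^q + y = x^{q+1} has exactly 2q solutions (x,y) ∈ F_{q^2}² is q²(q+1)(q−1)/2. -/
/-!
Write `x̄ = x ^ q`, `Tr x = x̄ + x` and `N x = x̄ x`, so that `𝔽_q = {x̄ = x}`. The parabola meets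
the curve in the zeros of `g x = Tr (a x² + b x + c) - N x` (`parabolaDefect`), an `𝔽_q`-valued
quadratic function on the plane `𝔽_{q²}` whose quadratic part is `Tr (a x²) - N x`
(`traceNormForm`).

If `N (2a) = 1` this quadratic part is degenerate: the `𝔽_q`-linear map `ℓ x = 2a x - x̄` has
kernel and image (the line `W = skewLine (2a)`) of size `q`, and
`4a g = ℓ² + 2bℓ + 4a Tr c + 2(2a b̄ + b) x̄`. For `b ∈ W` the last term vanishes, the zeros of `g`
are the `ℓ`-preimages of the roots in `W` of `z² + 2bz + 4a Tr c`, and there are `2q` of them iff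
the discriminant is the square of a nonzero element of `W`. For `b ∉ W`, `ℓ` is injective on the
zeros, so there are at most `q`.

If `N (2a) ≠ 1`, `ℓ` is bijective and a translation reduces `g` to `Tr (a y²) - N y + g x₀`.
Its zero set is either a cone (at most `2q - 1` points) or a nondegenerate conic, which has no
three points on an `𝔽_q`-line and hence at most `q + 2` points. Both are fewer than `2q`.

Finally, `N (2a) = 1` for `q + 1` values of `a`, then `b ∈ W` for `q` values of `b`, and the
`q - 1` nonzero `δ ∈ W` give `(q - 1) / 2` admissible values of `Tr c`, each taken `q` times.
-/

open Finset Polynomial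

theorem Finset.card_fiber_eq_of_card_fiber_le {α β : Type*} [DecidableEq β] {s : Finset α}
    {t : Finset β} {f : α → β} {n : ℕ} (hf : ∀ a ∈ s, f a ∈ t)
    (hle : ∀ b ∈ t, #{a ∈ s | f a = b} ≤ n) (hs : #t * n ≤ #s) :
    ∀ b ∈ t, #{a ∈ s | f a = b} = n := by
  have hsum : ∑ b ∈ t, #{a ∈ s | f a = b} = ∑ _b ∈ t, n := by
    refine le_antisymm (sum_le_sum hle) ?_
    rw [sum_const, smul_eq_mul, ← card_eq_sum_card_fiberwise hf]
    exact hs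
  exact (sum_eq_sum_iff_of_le hle).1 hsum

theorem Finset.card_filter_prod_eq {α β : Type*} [Fintype α] [Fintype β] {P : α → Prop}
    {Q : α → β → Prop} [DecidablePred P] [∀ a, DecidablePred (Q a)] {n : ℕ}
    (hQ : ∀ a, P a → #{b | Q a b} = n) :
    #{ab : α × β | P ab.1 ∧ Q ab.1 ab.2} = #{a | P a} * n := by
  rw [card_filter, Fintype.sum_prod_type, card_filter, sum_mul]
  refine sum_congr rfl fun a _ => ?_
  by_cases h : P a
  · rw [← hQ a h]
    simp [h]
  · simp [h]

section FiniteField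

variable {K : Type*} [Field K] [Fintype K] [DecidableEq K]

theorem card_filter_isRoot_le_s19 {p : K[X]} (hp : p ≠ 0) : #{x | p.IsRoot x} ≤ p.natDegree :=
  card_le_degree_of_subset_roots fun x hx => by simpa [mem_roots hp] using hx

theorem card_filter_pow_eq_le {m : ℕ} (hm : m ≠ 0) (y : K) : #{x : K | x ^ m = y} ≤ m := by
  have hp : (X ^ m - C y : K[X]) ≠ 0 := X_pow_sub_C_ne_zero (Nat.pos_of_ne_zero hm) y
  simpa [natDegree_X_pow_sub_C, sub_eq_zero] using card_filter_isRoot_le_s19 hp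

theorem card_filter_quadratic_eq_zero_le {a : K} (ha : a ≠ 0) (b c : K) :
    #{x : K | a * x ^ 2 + b * x + c = 0} ≤ 2 := by
  have hp : (C a * X ^ 2 + C b * X + C c : K[X]) ≠ 0 := by
    intro h
    simpa [natDegree_quadratic ha] using congrArg natDegree h
  simpa [natDegree_quadratic ha] using card_filter_isRoot_le_s19 hp

theorem card_filter_pow_eq_of_pow_eq_one {m t : ℕ} (hK : Fintype.card K = m * t + 1)
    (hm : m ≠ 0) (ht : t ≠ 0) {y : K} (hy : y ^ t = 1) : #{x : K | x ^ m = y} = m := by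
  have hy0 : y ≠ 0 := by rintro rfl; simp [ht] at hy
  have hmaps : ∀ x ∈ ({x | x ≠ 0} : Finset K), x ^ m ∈ ({z | z ^ t = 1} : Finset K) := by
    intro x hx
    rw [mem_filter] at hx ⊢
    rw [← pow_mul, ← Nat.add_sub_cancel (m * t) 1, ← hK]
    exact ⟨mem_univ _, FiniteField.pow_card_sub_one_eq_one x hx.2⟩
  have hunits : #({x | x ≠ 0} : Finset K) = m * t := by
    rw [filter_ne' univ, card_erase_of_mem (mem_univ _), card_univ, hK, Nat.add_sub_cancel]
  have key := Finset.card_fiber_eq_of_card_fiber_le hmaps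
    (fun z _ => (card_le_card (filter_subset_filter _ (subset_univ _))).trans
      (card_filter_pow_eq_le hm z))
    (by rw [hunits, mul_comm]; exact Nat.mul_le_mul_left m (card_filter_pow_eq_le ht 1))
    y (by simpa using hy)
  rw [filter_filter] at key
  convert key using 2
  ext x
  simp only [mem_filter, mem_univ, true_and, iff_and_self]
  rintro rfl rfl
  simp [hm] at hy0

theorem card_filter_mem_quadratic_eq_two_iff (h2 : (2 : K) ≠ 0) (H : AddSubgroup K)
    [DecidablePred (· ∈ H)] {b k : K} (hb : b ∈ H) :
    #{z | z ∈ H ∧ z ^ 2 + 2 * b * z + k = 0} = 2 ↔ ∃ δ ∈ H, δ ≠ 0 ∧ δ ^ 2 = b ^ 2 - k := by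
  constructor
  · intro h
    obtain ⟨x, y, hxy, hset⟩ := card_eq_two.1 h
    have hroot : ∀ z ∈ ({x, y} : Finset K), z ∈ H ∧ z ^ 2 + 2 * b * z + k = 0 := by
      intro z hz
      rw [← hset] at hz
      simpa using hz
    obtain ⟨hxH, hx⟩ := hroot x (mem_insert_self x {y})
    have hy := (hroot y (mem_insert_of_mem (mem_singleton_self y))).2
    refine ⟨x + b, H.add_mem hxH hb, fun h0 => hxy ?_, by linear_combination hx⟩
    have hyb : y + b = 0 := pow_eq_zero_iff two_ne_zero |>.1 <| by
      linear_combination hy - hx + (x + b) * h0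
    linear_combination h0 - hyb
  · rintro ⟨δ, hδ, hδ0, hδ2⟩
    have hset : ({z | z ∈ H ∧ z ^ 2 + 2 * b * z + k = 0} : Finset K) = {-b + δ, -b - δ} := by
      ext z
      simp only [mem_filter, mem_univ, true_and, mem_insert, mem_singleton]
      constructor
      · rintro ⟨-, hz⟩
        have : (z - (-b + δ)) * (z - (-b - δ)) = 0 := by linear_combination hz - hδ2
        rcases mul_eq_zero.1 this with h | h
        · exact .inl (by linear_combination h)
        · exact .inr (by linear_combination h)
      · rintro (rfl | rfl)
        · exact ⟨H.add_mem (H.neg_mem hb) hδ, by linear_combination hδ2⟩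
        · exact ⟨H.sub_mem (H.neg_mem hb) hδ, by linear_combination hδ2⟩
    rw [hset, card_pair]
    intro h
    exact hδ0 ((mul_eq_zero.1 (by linear_combination h : (2 : K) * δ = 0)).resolve_left h2)

theorem card_filter_mem_sq_eq (h2 : (2 : K) ≠ 0) (H : AddSubgroup K) [DecidablePred (· ∈ H)]
    (Δ : K) :
    #{δ | (δ ∈ H ∧ δ ≠ 0) ∧ δ ^ 2 = Δ} = if ∃ δ ∈ H, δ ≠ 0 ∧ δ ^ 2 = Δ then 2 else 0 := by
  split_ifs with h
  · obtain ⟨δ₀, hδ₀, hδ₀0, rfl⟩ := h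
    have hset : ({δ | (δ ∈ H ∧ δ ≠ 0) ∧ δ ^ 2 = δ₀ ^ 2} : Finset K) = {δ₀, -δ₀} := by
      ext δ
      simp only [mem_filter, mem_univ, true_and, mem_insert, mem_singleton]
      constructor
      · rintro ⟨-, hδ⟩
        rcases mul_eq_zero.1 (by linear_combination hδ : (δ - δ₀) * (δ + δ₀) = 0) with h | h
        · exact .inl (by linear_combination h)
        · exact .inr (by linear_combination h)
      · rintro (rfl | rfl)
        · exact ⟨⟨hδ₀, hδ₀0⟩, rfl⟩
        · exact ⟨⟨H.neg_mem hδ₀, neg_ne_zero.2 hδ₀0⟩, neg_sq δ₀⟩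
    rw [hset, card_pair]
    intro h
    exact hδ₀0 ((mul_eq_zero.1 (by linear_combination h : (2 : K) * δ₀ = 0)).resolve_left h2)
  · rw [card_eq_zero, filter_eq_empty_iff]
    rintro δ - ⟨⟨hδ, hδ0⟩, hδ2⟩
    exact h ⟨δ, hδ, hδ0, hδ2⟩

end FiniteField

section CardSq

variable {F : Type*} [Field F] [Fintype F] {q : ℕ}

theorem exists_ringChar_pow_eq_of_card_eq_sq (hF : Fintype.card F = q ^ 2) :
    ∃ k, ringChar F ^ k = q := by
  obtain ⟨n, hp, hn⟩ := FiniteField.card F (ringChar F)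
  obtain ⟨k, -, hk⟩ := (Nat.dvd_prime_pow hp).1 (hn ▸ hF ▸ Dvd.intro_left _ (sq q).symm)
  exact ⟨k, hk.symm⟩

theorem one_lt_of_card_eq_sq (hF : Fintype.card F = q ^ 2) : 1 < q := by
  have := Fintype.one_lt_card (α := F)
  rw [hF] at this
  by_contra h
  interval_cases q <;> simp at this

theorem two_ne_zero_of_card_eq_sq (hF : Fintype.card F = q ^ 2) (hodd : Odd q) :
    (2 : F) ≠ 0 := by
  refine Ring.two_ne_zero fun h2 => ?_
  obtain ⟨k, hk⟩ := exists_ringChar_pow_eq_of_card_eq_sq hF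
  rw [h2] at hk
  rcases k with _ | k
  · exact (one_lt_of_card_eq_sq hF).ne hk
  · exact Nat.not_even_iff_odd.2 hodd (hk ▸ (Nat.even_pow.2 ⟨even_two, k.succ_ne_zero⟩))

theorem three_le_of_card_eq_sq (hF : Fintype.card F = q ^ 2) (hodd : Odd q) : 3 ≤ q := by
  have := one_lt_of_card_eq_sq hF
  obtain ⟨r, rfl⟩ := hodd
  omega

theorem card_eq_sub_one_mul_add_one (hF : Fintype.card F = q ^ 2) :
    Fintype.card F = (q - 1) * (q + 1) + 1 := by
  obtain ⟨r, rfl⟩ : ∃ r, q = r + 1 := ⟨q - 1, by have := one_lt_of_card_eq_sq hF; omega⟩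
  rw [hF, Nat.add_sub_cancel]
  ring

theorem add_pow_of_card_eq_sq (hF : Fintype.card F = q ^ 2) (x y : F) :
    (x + y) ^ q = x ^ q + y ^ q := by
  obtain ⟨k, rfl⟩ := exists_ringChar_pow_eq_of_card_eq_sq hF
  have : Fact (ringChar F).Prime := ⟨CharP.char_is_prime F _⟩
  exact add_pow_char_pow x y _ _

theorem sub_pow_of_card_eq_sq (hF : Fintype.card F = q ^ 2) (x y : F) :
    (x - y) ^ q = x ^ q - y ^ q := by
  rw [eq_sub_iff_add_eq, ← add_pow_of_card_eq_sq hF, sub_add_cancel]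

theorem neg_pow_of_card_eq_sq (hF : Fintype.card F = q ^ 2) (x : F) : (-x) ^ q = -x ^ q := by
  rw [neg_eq_zero_sub, sub_pow_of_card_eq_sq hF, zero_pow (one_lt_of_card_eq_sq hF).ne_bot,
    zero_sub]

theorem two_pow_of_card_eq_sq (hF : Fintype.card F = q ^ 2) : (2 : F) ^ q = 2 := by
  rw [← one_add_one_eq_two, add_pow_of_card_eq_sq hF, one_pow]

theorem pow_pow_of_card_eq_sq (hF : Fintype.card F = q ^ 2) (x : F) : (x ^ q) ^ q = x := by
  rw [← pow_mul, ← sq, ← hF, FiniteField.pow_card]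

theorem pow_succ_eq_one_of_pow_eq_mul (hF : Fintype.card F = q ^ 2) {d u : F} (hd : d ≠ 0)
    (h : d ^ q = u * d) : u ^ (q + 1) = 1 := by
  have hq := one_lt_of_card_eq_sq hF
  have hu : u = d ^ (q - 1) := by
    rw [← mul_left_inj' hd, ← h, ← pow_succ, Nat.sub_add_cancel hq.le]
  rw [hu, ← pow_mul, ← Nat.add_sub_cancel ((q - 1) * (q + 1)) 1,
    ← card_eq_sub_one_mul_add_one hF, FiniteField.pow_card_sub_one_eq_one d hd]

/-- For `u ^ (q + 1) = 1`, the `𝔽_q`-line that is the image of `x ↦ u * x - x ^ q`. -/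
def skewLine (hF : Fintype.card F = q ^ 2) (u : F) : AddSubgroup F where
  carrier := {w | w ^ q * u = -w}
  add_mem' {v w} hv hw := by
    simp only [Set.mem_ofPred_eq, add_pow_of_card_eq_sq hF] at hv hw ⊢
    linear_combination hv + hw
  zero_mem' := by simp [zero_pow (one_lt_of_card_eq_sq hF).ne_bot]
  neg_mem' {w} hw := by
    simp only [Set.mem_ofPred_eq, neg_pow_of_card_eq_sq hF] at hw ⊢
    linear_combination -hw

theorem mem_skewLine {hF : Fintype.card F = q ^ 2} {u w : F} :
    w ∈ skewLine hF u ↔ w ^ q * u = -w :=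
  Iff.rfl

theorem mul_sub_pow_mem_skewLine (hF : Fintype.card F = q ^ 2) {u : F} (hu : u ^ (q + 1) = 1)
    (x : F) : u * x - x ^ q ∈ skewLine hF u := by
  rw [mem_skewLine, sub_pow_of_card_eq_sq hF, mul_pow, pow_pow_of_card_eq_sq hF]
  linear_combination x ^ q * hu

end CardSq

section Counts

variable {F : Type*} [Field F] [Fintype F] [DecidableEq F] {q : ℕ}

instance (hF : Fintype.card F = q ^ 2) (u : F) : DecidablePred (· ∈ skewLine hF u) :=
  fun _ => decidable_of_iff _ mem_skewLine.symm

theorem card_filter_pow_eq_mul (hF : Fintype.card F = q ^ 2) {l : F} (hl : l ^ (q + 1) = 1) :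
    #{x : F | x ^ q = l * x} = q := by
  have hq := one_lt_of_card_eq_sq hF
  have hset : ({x | x ^ q = l * x} : Finset F) =
      insert 0 ({x | x ^ (q - 1) = l} : Finset F) := by
    ext x
    rcases eq_or_ne x 0 with rfl | hx
    · simp [zero_pow (by omega : q ≠ 0)]
    · rw [mem_insert, mem_filter, mem_filter, ← Nat.sub_add_cancel hq.le, pow_succ,
        mul_left_inj' hx]
      simp [hx]
  have h0 : (0 : F) ∉ ({x | x ^ (q - 1) = l} : Finset F) := by
    rintro h
    rw [mem_filter, zero_pow (by omega)] at h
    simp [← h.2] at hl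
  rw [hset, card_insert_of_notMem h0, card_filter_pow_eq_of_pow_eq_one
    (card_eq_sub_one_mul_add_one hF) (by omega) (by omega) hl]
  omega

theorem card_filter_pow_succ_eq_one (hF : Fintype.card F = q ^ 2) :
    #{x : F | x ^ (q + 1) = 1} = q + 1 := by
  have hq := one_lt_of_card_eq_sq hF
  refine card_filter_pow_eq_of_pow_eq_one (t := q - 1) ?_ (by omega) (by omega) (one_pow _)
  rw [card_eq_sub_one_mul_add_one hF, mul_comm]

theorem card_filter_mem_skewLine (hF : Fintype.card F = q ^ 2) (hodd : Odd q) {u : F}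
    (hu : u ^ (q + 1) = 1) : #{w | w ∈ skewLine hF u} = q := by
  have hu0 : u ≠ 0 := by rintro rfl; simp at hu
  have hl : (-u⁻¹) ^ (q + 1) = 1 := by rw [hodd.add_one.neg_pow, inv_pow, hu, inv_one]
  convert card_filter_pow_eq_mul hF hl using 2
  ext w
  simp only [mem_filter, mem_univ, true_and, mem_skewLine]
  constructor <;> intro h <;> field_simp at h ⊢ <;> linear_combination h

theorem card_filter_mul_sub_pow_eq (hF : Fintype.card F = q ^ 2) (hodd : Odd q) {u w : F}
    (hu : u ^ (q + 1) = 1) (hw : w ∈ skewLine hF u) : #{x : F | u * x - x ^ q = w} = q := by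
  refine Finset.card_fiber_eq_of_card_fiber_le (t := {w | w ∈ skewLine hF u})
    (fun x _ => by simpa using mul_sub_pow_mem_skewLine hF hu x) (fun w _ => ?_) ?_ w
    (by simpa using hw)
  · rcases (filter (fun x => u * x - x ^ q = w) univ).eq_empty_or_nonempty with h | ⟨x₀, hx₀⟩
    · simp [h]
    calc _ ≤ #{t : F | t ^ q = u * t} := card_le_card_of_injOn (· - x₀) (fun x hx => ?_)
            (fun x _ y _ h => sub_left_injective h)
      _ = q := card_filter_pow_eq_mul hF hu
    simp only [coe_filter, mem_filter, mem_univ, true_and, Set.mem_ofPred_eq] at hx hx₀ ⊢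
    rw [sub_pow_of_card_eq_sq hF]
    linear_combination hx₀ - hx
  · rw [card_filter_mem_skewLine hF hodd hu, card_univ, hF, sq]

theorem card_filter_pow_add_self_eq_s19 (hF : Fintype.card F = q ^ 2) (hodd : Odd q) {v : F}
    (hv : v ^ q = v) : #{c : F | c ^ q + c = v} = q := by
  have hw : -v ∈ skewLine hF (-1) := by
    rw [mem_skewLine, neg_pow_of_card_eq_sq hF, hv]
    ring
  convert card_filter_mul_sub_pow_eq hF hodd hodd.add_one.neg_one_pow hw using 2
  ext c
  simp only [mem_filter, mem_univ, true_and]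
  constructor <;> intro h <;> linear_combination -h

end Counts

namespace Hermitian

variable {F : Type*} [Field F] [Fintype F] [DecidableEq F] {q : ℕ}

def parabolaDefect (q : ℕ) (a b c x : F) : F :=
  (a * x ^ 2 + b * x + c) ^ q + (a * x ^ 2 + b * x + c) - x ^ (q + 1)

omit [Fintype F] [DecidableEq F] in
theorem natCard_parabola_inter_eq_natCard_parabolaDefect (a b c : F) :
    Nat.card {xy : F × F // xy.2 = a * xy.1 ^ 2 + b * xy.1 + c ∧
      xy.2 ^ q + xy.2 = xy.1 ^ (q + 1)} = Nat.card {x // parabolaDefect q a b c x = 0} :=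
  Nat.card_congr
    { toFun := fun ⟨(x, _), hy, hxy⟩ => ⟨x, by rw [parabolaDefect, ← hy, hxy, sub_self]⟩
      invFun := fun ⟨x, hx⟩ => ⟨(x, a * x ^ 2 + b * x + c), rfl, sub_eq_zero.1 hx⟩
      left_inv := fun ⟨(_, _), hy, _⟩ => Subtype.ext (Prod.ext rfl hy.symm)
      right_inv := fun _ => rfl }

omit [DecidableEq F] in
theorem parabolaDefect_eq (hF : Fintype.card F = q ^ 2) (a b c x : F) :
    parabolaDefect q a b c x =
      a ^ q * (x ^ q) ^ 2 + b ^ q * x ^ q + (c ^ q + c) + a * x ^ 2 + b * x - x ^ q * x := by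
  rw [parabolaDefect, add_pow_of_card_eq_sq hF, add_pow_of_card_eq_sq hF, mul_pow, mul_pow,
    ← pow_mul, mul_comm 2 q, pow_mul, pow_succ]
  ring

section Degenerate

variable {a b c : F}

omit [Fintype F] [DecidableEq F] in
theorem ne_zero_of_two_mul_pow_eq_one (ha : (2 * a) ^ (q + 1) = 1) : a ≠ 0 := by
  rintro rfl
  simp at ha

omit [DecidableEq F] in
theorem four_mul_parabolaDefect (hF : Fintype.card F = q ^ 2) (ha : (2 * a) ^ (q + 1) = 1)
    (x : F) :
    4 * a * parabolaDefect q a b c x =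
      (2 * a * x - x ^ q) ^ 2 + 2 * b * (2 * a * x - x ^ q) + 4 * a * (c ^ q + c) +
        2 * (b ^ q * (2 * a) + b) * x ^ q := by
  rw [pow_succ, mul_pow, two_pow_of_card_eq_sq hF] at ha
  rw [parabolaDefect_eq hF]
  linear_combination (x ^ q) ^ 2 * ha

theorem card_filter_parabolaDefect_eq_zero_of_mem (hF : Fintype.card F = q ^ 2) (hodd : Odd q)
    (ha : (2 * a) ^ (q + 1) = 1) (hb : b ∈ skewLine hF (2 * a)) (c : F) :
    #{x | parabolaDefect q a b c x = 0} =
      q * #{z | z ∈ skewLine hF (2 * a) ∧ z ^ 2 + 2 * b * z + 4 * a * (c ^ q + c) = 0} := by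
  have h2 := two_ne_zero_of_card_eq_sq hF hodd
  have h4a : 4 * a ≠ 0 := by
    rw [show (4 : F) * a = 2 * (2 * a) by ring]
    exact mul_ne_zero h2 (mul_ne_zero h2 (ne_zero_of_two_mul_pow_eq_one ha))
  have hβ : b ^ q * (2 * a) + b = 0 := by rw [mem_skewLine] at hb; linear_combination hb
  have hroot : ∀ x, parabolaDefect q a b c x = 0 ↔
      (2 * a * x - x ^ q) ^ 2 + 2 * b * (2 * a * x - x ^ q) + 4 * a * (c ^ q + c) = 0 := by
    intro x
    rw [← mul_right_inj' h4a, mul_zero, four_mul_parabolaDefect hF ha, hβ]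
    ring_nf
  have hmaps : ∀ x ∈ ({x | parabolaDefect q a b c x = 0} : Finset F),
      2 * a * x - x ^ q ∈
        ({z | z ∈ skewLine hF (2 * a) ∧ z ^ 2 + 2 * b * z + 4 * a * (c ^ q + c) = 0} :
          Finset F) := by
    intro x hx
    simp only [mem_filter, mem_univ, true_and, hroot] at hx ⊢
    exact ⟨mul_sub_pow_mem_skewLine hF ha x, hx⟩
  rw [card_eq_sum_card_fiberwise hmaps, sum_const_nat fun z hz => ?_, mul_comm]
  simp only [mem_filter, mem_univ, true_and] at hz
  rw [filter_filter]
  convert card_filter_mul_sub_pow_eq hF hodd ha hz.1 using 2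
  ext x
  simp only [mem_filter, mem_univ, true_and, hroot, and_iff_right_iff_imp]
  rintro rfl
  exact hz.2

theorem card_filter_parabolaDefect_eq_zero_le_of_notMem (hF : Fintype.card F = q ^ 2)
    (hodd : Odd q) (ha : (2 * a) ^ (q + 1) = 1) (hb : b ∉ skewLine hF (2 * a)) (c : F) :
    #{x | parabolaDefect q a b c x = 0} ≤ q := by
  have hβ : 2 * (b ^ q * (2 * a) + b) ≠ 0 := by
    refine mul_ne_zero (two_ne_zero_of_card_eq_sq hF hodd) fun h => hb ?_
    rw [mem_skewLine]
    linear_combination h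
  calc _ ≤ #{w | w ∈ skewLine hF (2 * a)} :=
        card_le_card_of_injOn (fun x => 2 * a * x - x ^ q)
          (fun x _ => by simpa using mul_sub_pow_mem_skewLine hF ha x) fun x hx y hy hxy => ?_
    _ = q := card_filter_mem_skewLine hF hodd ha
  simp only [coe_filter, mem_univ, true_and, Set.mem_ofPred_eq] at hx hy hxy
  have hx' := four_mul_parabolaDefect hF ha (b := b) (c := c) x
  have hy' := four_mul_parabolaDefect hF ha (b := b) (c := c) y
  rw [hx, mul_zero] at hx'
  rw [hy, mul_zero] at hy'
  have hxy' : x ^ q = y ^ q := mul_left_cancel₀ hβ <| by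
    linear_combination hy' - hx' - (2 * a * x - x ^ q + 2 * a * y - y ^ q + 2 * b) * hxy
  rw [← pow_pow_of_card_eq_sq hF x, hxy', pow_pow_of_card_eq_sq hF]

theorem card_filter_two_mul_pow_eq_one (hF : Fintype.card F = q ^ 2) (hodd : Odd q) :
    #{a : F | (2 * a) ^ (q + 1) = 1} = q + 1 :=
  (card_equiv (Equiv.mulLeft₀ 2 (two_ne_zero_of_card_eq_sq hF hodd)) (by simp)).trans
    (card_filter_pow_succ_eq_one hF)

theorem card_filter_exists_sq_eq (hF : Fintype.card F = q ^ 2) (hodd : Odd q)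
    (ha : (2 * a) ^ (q + 1) = 1) (hb : b ∈ skewLine hF (2 * a)) :
    #{c | ∃ δ ∈ skewLine hF (2 * a), δ ≠ 0 ∧ δ ^ 2 = b ^ 2 - 4 * a * (c ^ q + c)} =
      q * (q - 1) / 2 := by
  refine Nat.eq_div_of_mul_eq_right two_ne_zero ?_
  set W := skewLine hF (2 * a)
  set D : Finset F := {δ | δ ∈ W ∧ δ ≠ 0}
  have hD : #D = q - 1 := by
    have h0 : (0 : F) ∈ ({w | w ∈ W} : Finset F) := mem_filter.2 ⟨mem_univ _, W.zero_mem⟩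
    rw [← card_filter_mem_skewLine hF hodd ha, ← card_erase_of_mem h0]
    congr 1
    ext δ
    simp [D, W, and_comm]
  have hn : 4 * a ^ q * a = 1 := by
    rw [pow_succ, mul_pow, two_pow_of_card_eq_sq hF] at ha
    linear_combination ha
  have hcount := sum_card_bipartiteAbove_eq_sum_card_bipartiteBelow (s := univ) (t := D)
    (r := fun c δ => δ ^ 2 = b ^ 2 - 4 * a * (c ^ q + c))
  simp only [bipartiteAbove, bipartiteBelow, D, filter_filter,
    card_filter_mem_sq_eq (two_ne_zero_of_card_eq_sq hF hodd) W] at hcount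
  calc _ = ∑ c : F, if ∃ δ ∈ W, δ ≠ 0 ∧ δ ^ 2 = b ^ 2 - 4 * a * (c ^ q + c) then 2 else 0 := by
        rw [card_filter, mul_sum]
        simp [W]
    _ = #D * q := hcount.trans (sum_const_nat fun δ hδ => ?_)
    _ = q * (q - 1) := by rw [hD, mul_comm]
  obtain ⟨hδ, -⟩ := (mem_filter.1 hδ).2
  rw [mem_skewLine] at hb hδ
  have hv : ((b ^ 2 - δ ^ 2) * a ^ q) ^ q = (b ^ 2 - δ ^ 2) * a ^ q := by
    simp only [sq, mul_pow, sub_pow_of_card_eq_sq hF, pow_pow_of_card_eq_sq hF]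
    linear_combination -a * (b ^ q * b ^ q - δ ^ q * δ ^ q) * hn
      - a ^ q * (b - 2 * a * b ^ q) * hb + a ^ q * (δ - 2 * a * δ ^ q) * hδ
  convert card_filter_pow_add_self_eq_s19 hF hodd hv using 2
  ext c
  simp only [mem_filter, mem_univ, true_and]
  constructor <;> intro h
  · linear_combination a ^ q * h - (c ^ q + c) * hn
  · linear_combination 4 * a * h - (δ ^ 2 - b ^ 2) * hn

end Degenerate

section Nondegenerate

variable {a b c : F}

omit [DecidableEq F] in
theorem exists_pow_sub_mul_eq (hF : Fintype.card F = q ^ 2) {u : F} (hu : u ^ (q + 1) ≠ 1)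
    (b : F) : ∃ x, x ^ q - u * x = b := by
  refine Finite.injective_iff_surjective.1 (fun x y hxy => ?_) b
  by_contra hne
  refine hu (pow_succ_eq_one_of_pow_eq_mul hF (sub_ne_zero.2 hne) ?_)
  rw [sub_pow_of_card_eq_sq hF]
  linear_combination hxy

def traceNormForm (q : ℕ) (a y : F) : F :=
  a ^ q * (y ^ q) ^ 2 - y ^ q * y + a * y ^ 2

omit [DecidableEq F] in
theorem parabolaDefect_add (hF : Fintype.card F = q ^ 2) {x₀ : F}
    (hx₀ : x₀ ^ q - 2 * a * x₀ = b) (y : F) :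
    parabolaDefect q a b c (x₀ + y) = traceNormForm q a y + parabolaDefect q a b c x₀ := by
  have hbq : b ^ q = x₀ - 2 * a ^ q * x₀ ^ q := by
    rw [← hx₀, sub_pow_of_card_eq_sq hF, mul_pow, mul_pow, two_pow_of_card_eq_sq hF,
      pow_pow_of_card_eq_sq hF]
  rw [parabolaDefect_eq hF, parabolaDefect_eq hF, add_pow_of_card_eq_sq hF, hbq, ← hx₀,
    traceNormForm]
  ring

theorem card_filter_traceNormForm_eq_zero_le (hF : Fintype.card F = q ^ 2) (ha : a ≠ 0) :
    #{y | traceNormForm q a y = 0} ≤ 2 * q - 1 := by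
  have hq := one_lt_of_card_eq_sq hF
  set roots : Finset F := {s | a ^ q * s ^ 2 + -1 * s + a = 0} with hroots
  have hsub : ({y | traceNormForm q a y = 0} : Finset F) ⊆
      insert 0 (roots.biUnion fun s => {y | y ^ (q - 1) = s}) := by
    intro y hy
    rcases eq_or_ne y 0 with rfl | hy0
    · exact mem_insert_self _ _
    refine mem_insert_of_mem (mem_biUnion.2 ⟨y ^ (q - 1), ?_, by simp⟩)
    have hyq : y ^ q = y ^ (q - 1) * y := by rw [← pow_succ, Nat.sub_add_cancel hq.le]
    replace hy := (mem_filter.1 hy).2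
    rw [traceNormForm, hyq] at hy
    rw [hroots, mem_filter]
    refine ⟨mem_univ _, (mul_eq_zero.1 (?_ : y ^ 2 * (a ^ q * (y ^ (q - 1)) ^ 2 +
      -1 * y ^ (q - 1) + a) = 0)).resolve_left (pow_ne_zero 2 hy0)⟩
    linear_combination hy
  calc _ ≤ #(roots.biUnion fun s => {y | y ^ (q - 1) = s}) + 1 :=
        (card_le_card hsub).trans (card_insert_le _ _)
    _ ≤ #roots * (q - 1) + 1 := by
        gcongr
        exact card_biUnion_le_card_mul _ _ _ fun s _ => card_filter_pow_eq_le (by omega) s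
    _ ≤ 2 * (q - 1) + 1 := by
        gcongr
        exact card_filter_quadratic_eq_zero_le (pow_ne_zero q ha) _ _
    _ = 2 * q - 1 := by omega

omit [DecidableEq F] in
theorem traceNormForm_add_mul (hF : Fintype.card F = q ^ 2) {μ : F} (hμ : μ ^ q = μ)
    (P d : F) :
    traceNormForm q a (P + μ * d) = traceNormForm q a P +
      μ * (2 * a ^ q * P ^ q * d ^ q + 2 * a * P * d - P ^ q * d - P * d ^ q) +
        μ ^ 2 * traceNormForm q a d := by
  simp only [traceNormForm, add_pow_of_card_eq_sq hF, mul_pow, hμ]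
  ring

omit [DecidableEq F] in
/-- `hB` says that `P` is polar to the isotropic vector `d ≠ 0`; for the nondegenerate form this
forces `P ∈ 𝔽_q d`, so `P` is isotropic too. -/
theorem traceNormForm_eq_zero_of_isotropic (hF : Fintype.card F = q ^ 2)
    (ha : (2 * a) ^ (q + 1) ≠ 1) {P d : F} (hd : d ≠ 0) (hQd : traceNormForm q a d = 0)
    (hB : 2 * a ^ q * P ^ q * d ^ q + 2 * a * P * d - P ^ q * d - P * d ^ q = 0) :
    traceNormForm q a P = 0 := by
  have hw : 2 * a ^ q * d ^ q - d ≠ 0 := by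
    intro h
    refine ha (pow_succ_eq_one_of_pow_eq_mul hF hd ?_)
    have h' : (2 * a ^ q * d ^ q - d) ^ q = 0 := by
      rw [h, zero_pow (one_lt_of_card_eq_sq hF).ne_bot]
    rw [sub_pow_of_card_eq_sq hF, mul_pow, mul_pow, two_pow_of_card_eq_sq hF,
      pow_pow_of_card_eq_sq hF, pow_pow_of_card_eq_sq hF] at h'
    linear_combination -h'
  simp only [traceNormForm] at hQd ⊢
  have hpar : P * d ^ q - d * P ^ q = 0 := by
    refine (mul_eq_zero.1 ?_).resolve_left hw
    linear_combination 2 * P * hQd - d * hB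
  refine (mul_eq_zero.1 (?_ : _ * d ^ 2 = 0)).resolve_right (pow_ne_zero 2 hd)
  linear_combination P ^ 2 * hQd - (a ^ q * (P ^ q * d + P * d ^ q) - P * d) * hpar

omit [DecidableEq F] in
theorem eq_of_traceNormForm_eq_of_sub_pow_eq (hF : Fintype.card F = q ^ 2)
    (ha : (2 * a) ^ (q + 1) ≠ 1) {P x y : F} (hP : traceNormForm q a P ≠ 0)
    (hx : traceNormForm q a x = traceNormForm q a P)
    (hy : traceNormForm q a y = traceNormForm q a P) (hxP : x ≠ P) (hyP : y ≠ P)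
    (hdir : (x - P) ^ (q - 1) = (y - P) ^ (q - 1)) : x = y := by
  have hq := one_lt_of_card_eq_sq hF
  by_contra hxy
  set d := x - P
  have hd : d ≠ 0 := sub_ne_zero.2 hxP
  set l := (y - P) / d
  have hl0 : l ≠ 0 := div_ne_zero (sub_ne_zero.2 hyP) hd
  have hl1 : l ≠ 1 := fun h => hxy (by rw [div_eq_one_iff_eq hd] at h; linear_combination -h)
  have hlq : l ^ q = l := by
    rw [← Nat.sub_add_cancel hq.le, pow_succ, div_pow, ← hdir,
      div_self (pow_ne_zero _ hd), one_mul]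
  have h1 := traceNormForm_add_mul hF (a := a) (one_pow q) P d
  have h2 := traceNormForm_add_mul hF (a := a) hlq P d
  rw [one_mul, add_sub_cancel, hx] at h1
  rw [div_mul_cancel₀ _ hd, add_sub_cancel, hy] at h2
  have hQd : traceNormForm q a d = 0 := by
    have : l * (l - 1) * traceNormForm q a d = 0 := by linear_combination -h2 + l * h1
    exact (mul_eq_zero.1 this).resolve_left (mul_ne_zero hl0 (sub_ne_zero.2 hl1))
  exact hP (traceNormForm_eq_zero_of_isotropic hF ha hd hQd (by linear_combination -h1 - hQd))

theorem card_filter_traceNormForm_eq_le (hF : Fintype.card F = q ^ 2)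
    (ha : (2 * a) ^ (q + 1) ≠ 1) {t : F} (ht : t ≠ 0) :
    #{y | traceNormForm q a y = t} ≤ q + 2 := by
  rcases (filter (fun y => traceNormForm q a y = t) univ).eq_empty_or_nonempty with h | ⟨P, hP⟩
  · simp [h]
  have hPt := (mem_filter.1 hP).2
  calc _ = #((filter (fun y => traceNormForm q a y = t) univ).erase P) + 1 :=
        (card_erase_add_one hP).symm
    _ ≤ #{s : F | s ^ (q + 1) = 1} + 1 := by
        refine Nat.add_le_add_right (card_le_card_of_injOn (fun y => (y - P) ^ (q - 1))
          (fun y hy => ?_) fun x hx y hy hxy => ?_) 1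
        · simp only [coe_erase, coe_filter, mem_univ, true_and, Set.mem_sdiff,
            Set.mem_ofPred_eq, Set.mem_singleton_iff] at hy ⊢
          refine pow_succ_eq_one_of_pow_eq_mul hF (sub_ne_zero.2 hy.2) ?_
          rw [← pow_succ, Nat.sub_add_cancel (one_lt_of_card_eq_sq hF).le]
        · simp only [coe_erase, coe_filter, mem_univ, true_and, Set.mem_sdiff,
            Set.mem_ofPred_eq, Set.mem_singleton_iff] at hx hy
          exact eq_of_traceNormForm_eq_of_sub_pow_eq hF ha (hPt ▸ ht) (hx.1.trans hPt.symm)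
            (hy.1.trans hPt.symm) hx.2 hy.2 hxy
    _ = q + 2 := by rw [card_filter_pow_succ_eq_one hF]

theorem card_filter_parabolaDefect_eq_zero_ne_two_mul (hF : Fintype.card F = q ^ 2)
    (hodd : Odd q) (ha0 : a ≠ 0) (ha : (2 * a) ^ (q + 1) ≠ 1) (b c : F) :
    #{x | parabolaDefect q a b c x = 0} ≠ 2 * q := by
  have hq := three_le_of_card_eq_sq hF hodd
  obtain ⟨x₀, hx₀⟩ := exists_pow_sub_mul_eq hF ha b
  have hcard : #{x | parabolaDefect q a b c x = 0} =
      #{y | traceNormForm q a y = -parabolaDefect q a b c x₀} := by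
    refine (card_equiv (Equiv.addLeft x₀) fun y => ?_).symm
    simp [parabolaDefect_add hF hx₀, eq_neg_iff_add_eq_zero]
  rw [hcard]
  rcases eq_or_ne (parabolaDefect q a b c x₀) 0 with h0 | h0
  · rw [h0, neg_zero]
    have := card_filter_traceNormForm_eq_zero_le hF ha0
    omega
  · have := card_filter_traceNormForm_eq_le hF ha (neg_ne_zero.2 h0)
    omega

end Nondegenerate

theorem card_filter_parabolaDefect_eq_zero_eq_two_mul_iff (hF : Fintype.card F = q ^ 2)
    (hodd : Odd q) {a : F} (ha : a ≠ 0) (b c : F) :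
    #{x | parabolaDefect q a b c x = 0} = 2 * q ↔
      (2 * a) ^ (q + 1) = 1 ∧ b ∈ skewLine hF (2 * a) ∧
        ∃ δ ∈ skewLine hF (2 * a), δ ≠ 0 ∧ δ ^ 2 = b ^ 2 - 4 * a * (c ^ q + c) := by
  have hq := three_le_of_card_eq_sq hF hodd
  by_cases hA : (2 * a) ^ (q + 1) = 1
  · by_cases hb : b ∈ skewLine hF (2 * a)
    · rw [card_filter_parabolaDefect_eq_zero_of_mem hF hodd hA hb,
        ← card_filter_mem_quadratic_eq_two_iff (two_ne_zero_of_card_eq_sq hF hodd) _ hb,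
        mul_comm, Nat.mul_left_inj (by omega)]
      simp [hA, hb]
    · have := card_filter_parabolaDefect_eq_zero_le_of_notMem hF hodd hA hb c
      simp only [hb, false_and, and_false, iff_false]
      omega
  · simp [hA, card_filter_parabolaDefect_eq_zero_ne_two_mul hF hodd ha hA]

end Hermitian

open Hermitian in
theorem parabola_count_general (q : ℕ) (hodd : Odd q) (F : Type) [Field F] [Fintype F]
    (hF : Fintype.card F = q ^ 2) :
    Nat.card {abc : F × F × F // abc.1 ≠ 0 ∧
      Nat.card {xy : F × F // xy.2 = abc.1 * xy.1 ^ 2 + abc.2.1 * xy.1 + abc.2.2 ∧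
        xy.2 ^ q + xy.2 = xy.1 ^ (q + 1)} = 2 * q}
      = q ^ 2 * (q + 1) * (q - 1) / 2 := by
  classical
  simp only [natCard_parabola_inter_eq_natCard_parabolaDefect]
  simp only [Nat.card_eq_fintype_card, Fintype.card_subtype]
  rw [filter_congr fun abc _ => by
    rw [and_congr_right fun ha => card_filter_parabolaDefect_eq_zero_eq_two_mul_iff hF hodd ha _ _,
      and_iff_right_of_imp fun h => ne_zero_of_two_mul_pow_eq_one h.1]]
  calc _ = #{a : F | (2 * a) ^ (q + 1) = 1} * (q * (q * (q - 1) / 2)) :=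
        card_filter_prod_eq (Q := fun a (bc : F × F) => bc.1 ∈ skewLine hF (2 * a) ∧
          ∃ δ ∈ skewLine hF (2 * a), δ ≠ 0 ∧ δ ^ 2 = bc.1 ^ 2 - 4 * a * (bc.2 ^ q + bc.2))
          fun a ha => (card_filter_prod_eq fun b hb =>
            card_filter_exists_sq_eq (a := a) (b := b) hF hodd ha hb).trans
              (by rw [card_filter_mem_skewLine hF hodd ha])
    _ = q ^ 2 * (q + 1) * (q - 1) / 2 := by
        obtain ⟨k, hk⟩ : ∃ k, q * (q - 1) = 2 * k :=
          ⟨_, (Nat.two_mul_div_two_of_even (Nat.even_mul_pred_self q)).symm⟩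
        have hnum : q ^ 2 * (q + 1) * (q - 1) = 2 * ((q + 1) * (q * k)) := by
          rw [show q ^ 2 * (q + 1) * (q - 1) = (q + 1) * q * (q * (q - 1)) by ring, hk]
          ring
        rw [card_filter_two_mul_pow_eq_one hF hodd, hk, hnum, Nat.mul_div_cancel_left _ two_pos,
          Nat.mul_div_cancel_left _ two_pos]

/-- For odd `q`, the number of parabolas `y = ax² + bx + c` (`a ≠ 0`) — that is, of
smooth conics through `P_∞` tangent to the Hermitian curve at `P_∞` — meeting the
Hermitian curve `y^q + y = x^(q+1)` in exactly `2q` affine rational points is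
`q²(q+1)(q-1)/2`. -/
theorem parabola_count (p e q : ℕ) (hp : p.Prime) (hq : q = p ^ e) (he : 0 < e)
    (hodd : Odd q) (F : Type) [Field F] [Fintype F] [CharP F p]
    (hF : Fintype.card F = q ^ 2) :
    Nat.card {abc : F × F × F // abc.1 ≠ 0 ∧
      Nat.card {xy : F × F // xy.2 = abc.1 * xy.1 ^ 2 + abc.2.1 * xy.1 + abc.2.2 ∧
        xy.2 ^ q + xy.2 = xy.1 ^ (q + 1)} = 2 * q}
      = q ^ 2 * (q + 1) * (q - 1) / 2 :=
  parabola_count_general q hodd F hF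
end
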